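/- arXiv:1809.09232 — 5 statements merged into one kernel-verified Lean document; each statement's English description precedes it below -/
import Mathlib

section
/- Let a, b, q, r be non-negative integers with q, r ≥ 2 and a + b ≥ 1. If two graphs H and H' are q-Ramsey-equivalent and also r-Ramsey-equivalent, then H and H' are (aq + br)-Ramsey-equivalent. -/
open SimpleGraph

/-- The colouring `c` contains a copy of `H` in `G` all of whose edges have colour `i`. -/
def HasMonoCopyColor {V W : Type*} (G : SimpleGraph V) (H : SimpleGraph W) {q : ℕ}
    (c : Sym2 V → Fin q) (i : Fin q) : Prop :=
  ∃ f : W ↪ V, ∀ a b, H.Adj a b → G.Adj (f a) (f b) ∧ c s(f a, f b) = i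

/-- The colouring `c` contains a monochromatic copy of `H` in `G`. -/
def HasMonoCopy {V W : Type*} (G : SimpleGraph V) (H : SimpleGraph W) {q : ℕ}
    (c : Sym2 V → Fin q) : Prop :=
  ∃ i : Fin q, HasMonoCopyColor G H c i

/-- `G` is `q`-Ramsey for `H`: every `q`-colouring of the edges of `G` contains a
monochromatic copy of `H`. -/
def IsRamsey (q : ℕ) {V W : Type*} (G : SimpleGraph V) (H : SimpleGraph W) : Prop :=
  ∀ c : Sym2 V → Fin q, HasMonoCopy G H c

/-- `H` and `H'` are `q`-Ramsey-equivalent: a (finite) graph is `q`-Ramsey for `H`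
iff it is `q`-Ramsey for `H'`. -/
def RamseyEquiv (q : ℕ) {W W' : Type*} (H : SimpleGraph W) (H' : SimpleGraph W') : Prop :=
  ∀ (V : Type) [Fintype V] (G : SimpleGraph V), IsRamsey q G H ↔ IsRamsey q G H'

/-!
A `(p + r)`-colouring of `G` is the same as a splitting of the edge set of `G` into two parts
together with a `p`-colouring of the first part and an `r`-colouring of the second. Hence, for
`p, r ≥ 1`, `G → (H)_{p+r}` holds iff for every such splitting the first part is `p`-Ramsey for `H`
or the second is `r`-Ramsey for `H`. This criterion only mentions `p`- and `r`-Ramsey properties,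
so the `q` for which `H` and `H'` are `q`-Ramsey-equivalent form an additive submonoid of `ℕ`.
-/

section

variable {V W W' : Type*} {H : SimpleGraph W} {H' : SimpleGraph W'} {p r : ℕ}

theorem HasMonoCopyColor.transfer {G G' : SimpleGraph V} {q q' : ℕ} {c : Sym2 V → Fin q}
    {c' : Sym2 V → Fin q'} {i : Fin q} {i' : Fin q'}
    (h : ∀ x y, G.Adj x y → c s(x, y) = i → G'.Adj x y ∧ c' s(x, y) = i')
    (hc : HasMonoCopyColor G H c i) : HasMonoCopyColor G' H c' i' := by
  obtain ⟨f, hf⟩ := hc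
  exact ⟨f, fun a b hab => h _ _ (hf a b hab).1 (hf a b hab).2⟩

theorem IsRamsey.split {G : SimpleGraph V} (hG : IsRamsey (p + r) G H) (s : Set (Sym2 V)) :
    IsRamsey p (G.deleteEdges sᶜ) H ∨ IsRamsey r (G.deleteEdges s) H := by
  classical
  by_contra! ⟨h₁, h₂⟩
  obtain ⟨d₁, hd₁⟩ : ∃ d₁, ¬ HasMonoCopy (G.deleteEdges sᶜ) H d₁ := not_forall.mp h₁
  obtain ⟨d₂, hd₂⟩ : ∃ d₂, ¬ HasMonoCopy (G.deleteEdges s) H d₂ := not_forall.mp h₂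
  let d (e : Sym2 V) : Fin (p + r) :=
    finSumFinEquiv (if e ∈ s then .inl (d₁ e) else .inr (d₂ e))
  obtain ⟨k, hk⟩ := hG d
  obtain ⟨k | k, rfl⟩ := finSumFinEquiv.surjective k
  · refine hd₁ ⟨k, hk.transfer fun x y hxy hdk => ?_⟩
    by_cases hs : s(x, y) ∈ s <;>
      simp_all [d, -finSumFinEquiv_apply_left, -finSumFinEquiv_apply_right]
  · refine hd₂ ⟨k, hk.transfer fun x y hxy hdk => ?_⟩
    by_cases hs : s(x, y) ∈ s <;>
      simp_all [d, -finSumFinEquiv_apply_left, -finSumFinEquiv_apply_right]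

theorem isRamsey_add_of_forall_split [NeZero p] [NeZero r] {G : SimpleGraph V}
    (h : ∀ s : Set (Sym2 V), IsRamsey p (G.deleteEdges sᶜ) H ∨ IsRamsey r (G.deleteEdges s) H) :
    IsRamsey (p + r) G H := by
  intro c
  let c' (e : Sym2 V) : Fin p ⊕ Fin r := finSumFinEquiv.symm (c e)
  rcases h {e | (c' e).isLeft} with h₁ | h₂
  · obtain ⟨k, hk⟩ := h₁ fun e => (c' e).elim id fun _ => 0
    refine ⟨finSumFinEquiv (.inl k), hk.transfer fun x y hxy hck => ?_⟩
    cases hc : c' s(x, y) <;> simp_all [c', Equiv.symm_apply_eq]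
  · obtain ⟨k, hk⟩ := h₂ fun e => (c' e).elim (fun _ => 0) id
    refine ⟨finSumFinEquiv (.inr k), hk.transfer fun x y hxy hck => ?_⟩
    cases hc : c' s(x, y) <;> simp_all [c', Equiv.symm_apply_eq]

theorem isRamsey_add_iff [NeZero p] [NeZero r] (G : SimpleGraph V) :
    IsRamsey (p + r) G H ↔
      ∀ s : Set (Sym2 V), IsRamsey p (G.deleteEdges sᶜ) H ∨ IsRamsey r (G.deleteEdges s) H :=
  ⟨IsRamsey.split, isRamsey_add_of_forall_split⟩

-- With no colours available, `IsRamsey 0 G H` only says that `Sym2 V` is nonempty.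
theorem ramseyEquiv_zero : RamseyEquiv 0 H H' := fun V _ G => by
  simp [IsRamsey, HasMonoCopy]

theorem RamseyEquiv.add (hp : RamseyEquiv p H H') (hr : RamseyEquiv r H H') :
    RamseyEquiv (p + r) H H' := by
  rcases eq_zero_or_neZero p with rfl | _
  · simpa using hr
  rcases eq_zero_or_neZero r with rfl | _
  · simpa using hp
  intro V _ G
  simp only [isRamsey_add_iff, hp V, hr V]

def ramseyEquivAddSubmonoid (H : SimpleGraph W) (H' : SimpleGraph W') : AddSubmonoid ℕ where
  carrier := {q | RamseyEquiv q H H'}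
  zero_mem' := ramseyEquiv_zero
  add_mem' := RamseyEquiv.add

end

theorem stmt4_general {W W' : Type}
    (H : SimpleGraph W) (H' : SimpleGraph W')
    (a b q r : ℕ)
    (hq_equiv : RamseyEquiv q H H') (hr_equiv : RamseyEquiv r H H') :
    RamseyEquiv (a * q + b * r) H H' := by
  have hq : q ∈ ramseyEquivAddSubmonoid H H' := hq_equiv
  have hr : r ∈ ramseyEquivAddSubmonoid H H' := hr_equiv
  rw [← smul_eq_mul a q, ← smul_eq_mul b r]
  exact add_mem (nsmul_mem hq a) (nsmul_mem hr b)

/-- If `H` and `H'` are `q`-Ramsey-equivalent and `r`-Ramsey-equivalent,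
with `q, r ≥ 2` and `a + b ≥ 1`, then they are `(a*q + b*r)`-Ramsey-equivalent. -/
theorem stmt4 {W W' : Type} [Fintype W] [Fintype W']
    (H : SimpleGraph W) (H' : SimpleGraph W')
    (a b q r : ℕ) (hq : 2 ≤ q) (hr : 2 ≤ r) (hab : 1 ≤ a + b)
    (hq_equiv : RamseyEquiv q H H') (hr_equiv : RamseyEquiv r H H') :
    RamseyEquiv (a * q + b * r) H H' :=
  stmt4_general H H' a b q r hq_equiv hr_equiv
end

section
/- For every integer q ≥ 3, the graphs K_3 + K_2 and K_3 are q-Ramsey-equivalent; that is, for every graph G, G → (K_3)_q if and only if G → (K_3 + K_2)_q. -/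
open SimpleGraph

namespace Stmt5Aux

variable {V : Type} {q : ℕ}

/-- A monochromatic triangle of colour `i` on `x,y,z`. -/
def MonoTri (G : SimpleGraph V) (c : Sym2 V → Fin q) (i : Fin q) (x y z : V) : Prop :=
  G.Adj x y ∧ G.Adj x z ∧ G.Adj y z ∧ c s(x,y) = i ∧ c s(x,z) = i ∧ c s(y,z) = i

/-- From a mono triangle plus a disjoint mono edge of the same colour, build a copy of K3+K2. -/
lemma copy_of_tri_edge {G : SimpleGraph V} {c : Sym2 V → Fin q} {i : Fin q} {x y z u v : V}
    (ht : MonoTri G c i x y z) (huv : G.Adj u v) (hcuv : c s(u,v) = i)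
    (hux : u ≠ x) (huy : u ≠ y) (huz : u ≠ z)
    (hvx : v ≠ x) (hvy : v ≠ y) (hvz : v ≠ z) :
    HasMonoCopy G ((⊤ : SimpleGraph (Fin 3)) ⊕g (⊤ : SimpleGraph (Fin 2))) c := by
  obtain ⟨axy, axz, ayz, cxy, cxz, cyz⟩ := ht
  have hxy : x ≠ y := axy.ne
  have hxz : x ≠ z := axz.ne
  have hyz : y ≠ z := ayz.ne
  have huv' : u ≠ v := huv.ne
  have cyx : c s(y,x) = i := by rw [Sym2.eq_swap]; exact cxy
  have czx : c s(z,x) = i := by rw [Sym2.eq_swap]; exact cxz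
  have czy : c s(z,y) = i := by rw [Sym2.eq_swap]; exact cyz
  have cvu : c s(v,u) = i := by rw [Sym2.eq_swap]; exact hcuv
  have ayx := axy.symm
  have azx := axz.symm
  have azy := ayz.symm
  have avu := huv.symm
  refine ⟨i, ⟨Sum.elim ![x,y,z] ![u,v], ?_⟩, ?_⟩
  · rintro (a|a) (b|b) h
    · fin_cases a <;> fin_cases b <;> simp_all
    · exfalso; fin_cases a <;> fin_cases b <;> simp_all
    · exfalso; fin_cases a <;> fin_cases b <;> simp_all
    · fin_cases a <;> fin_cases b <;> simp_all
  · rintro (a|a) (b|b) hab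
    · simp only [SimpleGraph.sum_adj, top_adj] at hab
      fin_cases a <;> fin_cases b <;> first | exact ⟨‹_›, ‹_›⟩ | simp_all
    · simp [SimpleGraph.sum_adj] at hab
    · simp [SimpleGraph.sum_adj] at hab
    · simp only [SimpleGraph.sum_adj, top_adj] at hab
      fin_cases a <;> fin_cases b <;> first | exact ⟨‹_›, ‹_›⟩ | simp_all

/-- A chain of `t` pairwise disjoint monochromatic triangles with distinct colours. -/
def Chain (G : SimpleGraph V) (c : Sym2 V → Fin q) (t : ℕ) : Prop :=
  ∃ (w : Fin t × Fin 3 → V) (j : Fin t → Fin q), Function.Injective w ∧ Function.Injective j ∧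
    ∀ i : Fin t, MonoTri G c (j i) (w (i,0)) (w (i,1)) (w (i,2))

lemma exists_pick (hq : 3 ≤ q) (a b : Fin q) : ∃ k : Fin q, k ≠ a ∧ k ≠ b := by
  by_contra h
  push_neg at h
  have hsub : (Finset.univ : Finset (Fin q)) ⊆ {a, b} := by
    intro k _
    rcases eq_or_ne k a with rfl | hk
    · simp
    · simp [h k hk]
  have h1 := Finset.card_le_card hsub
  have h2 : ({a, b} : Finset (Fin q)).card ≤ 2 :=
    (Finset.card_insert_le _ _).trans (by simp)
  simp [Finset.card_univ] at h1
  omega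

/-- Build a colouring of `Sym2 V` that takes prescribed values on pairs inside the image of
an injective map `w`, star values on mixed pairs, and agrees with `c` outside. -/
lemma buildColoring (G : SimpleGraph V) (c : Sym2 V → Fin q) {t : ℕ}
    (w : Fin t × Fin 3 → V) (hw : Function.Injective w)
    (Hc : Fin t × Fin 3 → Fin t × Fin 3 → Fin q) (hHc : ∀ p p', Hc p p' = Hc p' p)
    (g : Fin t × Fin 3 → Fin q) :
    ∃ d : Sym2 V → Fin q,
      (∀ p p', d s(w p, w p') = Hc p p') ∧
      (∀ p v, (∀ p', w p' ≠ v) → d s(w p, v) = g p) ∧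
      (∀ u v, (∀ p, w p ≠ u) → (∀ p, w p ≠ v) → d s(u,v) = c s(u,v)) := by
  classical
  have hch : ∀ (u : V) (h : ∃ p, w p = u) (p : Fin t × Fin 3), w p = u → h.choose = p := by
    intro u h p hp
    apply hw
    rw [h.choose_spec, hp]
  set F : V → V → Fin q := fun u v =>
    if hu : ∃ p, w p = u then
      if hv : ∃ p, w p = v then Hc hu.choose hv.choose else g hu.choose
    else if hv : ∃ p, w p = v then g hv.choose
    else c s(u,v) with hF
  have hsymm : ∀ u v, F u v = F v u := by
    intro u v
    by_cases hu : ∃ p, w p = u <;> by_cases hv : ∃ p, w p = v <;>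
      simp only [hF, hu, hv, dif_pos, dif_neg, not_false_iff]
    · exact hHc _ _
    · rw [Sym2.eq_swap]
  refine ⟨Sym2.lift ⟨F, hsymm⟩, ?_, ?_, ?_⟩
  · intro p p'
    have hu : ∃ p0, w p0 = w p := ⟨p, rfl⟩
    have hv : ∃ p0, w p0 = w p' := ⟨p', rfl⟩
    simp only [Sym2.lift_mk, hF, dif_pos hu, dif_pos hv]
    rw [hch _ hu p rfl, hch _ hv p' rfl]
  · intro p v hv'
    have hu : ∃ p0, w p0 = w p := ⟨p, rfl⟩
    have hv : ¬ ∃ p0, w p0 = v := by push_neg; exact hv'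
    simp only [Sym2.lift_mk, hF, dif_pos hu, dif_neg hv]
    rw [hch _ hu p rfl]
  · intro u v hu' hv'
    have hu : ¬ ∃ p0, w p0 = u := by push_neg; exact hu'
    have hv : ¬ ∃ p0, w p0 = v := by push_neg; exact hv'
    simp only [Sym2.lift_mk, hF, dif_neg hu, dif_neg hv]

/-! ### The cross-colour function `dval` (a mono-triangle-free colouring of `K_t`). -/

def dval (q a b : ℕ) : ℕ := if 4 ≤ q ∧ q ≤ min a b + 4 then q - 4 + (a + b) % 2 else min a b

lemma dval_comm (q a b : ℕ) : dval q a b = dval q b a := by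
  unfold dval; rw [Nat.min_comm a b, Nat.add_comm a b]

lemma dval_lt (hq : 3 ≤ q) {a b : ℕ} (ha : a < q) (hb : b < q) : dval q a b < q := by
  unfold dval; split_ifs <;> omega

lemma dval_le {t : ℕ} (hq : 3 ≤ q) (hcase : t ≤ q - 1 ∨ 4 ≤ q) (htq : t ≤ q)
    {a b : ℕ} (ha : a < t) (hb : b < t) (hab : a ≠ b) : dval q a b + 3 ≤ q := by
  unfold dval; split_ifs <;> omega

lemma dval_mono {a b c : ℕ} (ha : a < q) (hb : b < q) (hc : c < q)
    (hab : a ≠ b) (hac : a ≠ c) (hbc : b ≠ c) :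
    ¬ (dval q a b = dval q a c ∧ dval q a c = dval q b c) := by
  unfold dval; split_ifs <;> omega

/-! ### The gadget colouring of the triangles' vertex set. -/

def Hcol {t : ℕ} (jx jy : Fin t → Fin q) (ψ1 ψ2 : Fin q) (D : Fin t → Fin t → Fin q)
    (p p' : Fin t × Fin 3) : Fin q :=
  if p.1 = p'.1 then (if p.2.val + p'.2.val = 2 then jy p.1 else jx p.1)
  else if p.2 = p'.2 then D p.1 p'.1
  else if p.2.val + p'.2.val = 2 then ψ2 else ψ1

variable {t : ℕ} {jx jy : Fin t → Fin q} {ψ1 ψ2 : Fin q} {D : Fin t → Fin t → Fin q}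

lemma Hcol_symm (hD : ∀ i i', D i i' = D i' i) (p p' : Fin t × Fin 3) :
    Hcol jx jy ψ1 ψ2 D p p' = Hcol jx jy ψ1 ψ2 D p' p := by
  unfold Hcol
  rw [Nat.add_comm p.2.val p'.2.val]
  by_cases h1 : p.1 = p'.1
  · rw [if_pos h1, if_pos h1.symm, h1]
  · rw [if_neg h1, if_neg (Ne.symm h1)]
    by_cases h2 : p.2 = p'.2
    · rw [if_pos h2, if_pos h2.symm, hD]
    · rw [if_neg h2, if_neg (Ne.symm h2)]

lemma Hcol_within {i : Fin t} {a b : Fin 3} :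
    Hcol jx jy ψ1 ψ2 D (i,a) (i,b) = if a.val + b.val = 2 then jy i else jx i := by
  simp [Hcol]

lemma Hcol_crossD {i i' : Fin t} {a : Fin 3} (h : i ≠ i') :
    Hcol jx jy ψ1 ψ2 D (i,a) (i',a) = D i i' := by
  simp [Hcol, h]

lemma Hcol_crossPsi {i i' : Fin t} {a b : Fin 3} (h : i ≠ i') (hab : a ≠ b) :
    Hcol jx jy ψ1 ψ2 D (i,a) (i',b) = if a.val + b.val = 2 then ψ2 else ψ1 := by
  simp [Hcol, h, hab]

lemma fin3_sum_tri {a1 a2 a3 : Fin 3} (h12 : a1 ≠ a2) (h13 : a1 ≠ a3) (h23 : a2 ≠ a3) :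
    (a1.val + a2.val = 2 ∧ ¬(a1.val + a3.val = 2) ∧ ¬(a2.val + a3.val = 2)) ∨
    (a1.val + a3.val = 2 ∧ ¬(a1.val + a2.val = 2) ∧ ¬(a2.val + a3.val = 2)) ∨
    (a2.val + a3.val = 2 ∧ ¬(a1.val + a2.val = 2) ∧ ¬(a1.val + a3.val = 2)) := by
  have b1 := a1.isLt; have b2 := a2.isLt; have b3 := a3.isLt
  have v12 : a1.val ≠ a2.val := fun h => h12 (Fin.ext h)
  have v13 : a1.val ≠ a3.val := fun h => h13 (Fin.ext h)
  have v23 : a2.val ≠ a3.val := fun h => h23 (Fin.ext h)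
  omega

/-- The gadget colouring has no monochromatic triangle. -/
lemma gadget_nomono
    (hxy : ∀ i, jx i ≠ jy i) (hyψ : ∀ i, jy i ≠ ψ1) (hψ : ψ1 ≠ ψ2)
    (hD1 : ∀ i i', i ≠ i' → D i i' ≠ ψ1) (hD2 : ∀ i i', i ≠ i' → D i i' ≠ ψ2)
    (hDm : ∀ i1 i2 i3 : Fin t, i1 ≠ i2 → i1 ≠ i3 → i2 ≠ i3 →
      ¬ (D i1 i2 = D i1 i3 ∧ D i1 i3 = D i2 i3)) :
    ∀ p1 p2 p3 : Fin t × Fin 3, p1 ≠ p2 → p1 ≠ p3 → p2 ≠ p3 →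
      ¬ (Hcol jx jy ψ1 ψ2 D p1 p2 = Hcol jx jy ψ1 ψ2 D p1 p3 ∧
         Hcol jx jy ψ1 ψ2 D p1 p3 = Hcol jx jy ψ1 ψ2 D p2 p3) := by
  rintro ⟨i1, a1⟩ ⟨i2, a2⟩ ⟨i3, a3⟩ h12 h13 h23 ⟨E1, E2⟩
  by_cases g12 : i1 = i2 <;> by_cases g13 : i1 = i3 <;> by_cases g23 : i2 = i3
  -- case A : all same group
  · subst g12; subst g13
    have hA12 : a1 ≠ a2 := fun h => h12 (by rw [h])
    have hA13 : a1 ≠ a3 := fun h => h13 (by rw [h])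
    have hA23 : a2 ≠ a3 := fun h => h23 (by rw [h])
    rw [Hcol_within, Hcol_within] at E1
    rw [Hcol_within, Hcol_within] at E2
    have b1 := a1.isLt; have b2 := a2.isLt; have b3 := a3.isLt
    have hval12 : a1.val ≠ a2.val := fun h => hA12 (Fin.ext h)
    have hval13 : a1.val ≠ a3.val := fun h => hA13 (Fin.ext h)
    have hval23 : a2.val ≠ a3.val := fun h => hA23 (Fin.ext h)
    have tri : (a1.val + a2.val = 2 ∧ a1.val + a3.val ≠ 2 ∧ a2.val + a3.val ≠ 2) ∨
        (a1.val + a3.val = 2 ∧ a1.val + a2.val ≠ 2 ∧ a2.val + a3.val ≠ 2) ∨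
        (a2.val + a3.val = 2 ∧ a1.val + a2.val ≠ 2 ∧ a1.val + a3.val ≠ 2) := by omega
    rcases tri with ⟨u, v, w⟩ | ⟨u, v, w⟩ | ⟨u, v, w⟩ <;>
      simp only [u, v, w, if_pos, if_neg, if_true, if_false] at E1 E2 <;>
      first
        | exact hxy i1 (E1 ▸ rfl)
        | exact hxy i1 E1.symm
        | exact hxy i1 E1
        | exact hxy i1 E2
        | exact hxy i1 E2.symm
  · exact absurd (g12.symm.trans g13) g23
  · exact absurd (g12.trans g23) g13
  -- case B : p1,p2 in the same group, p3 elsewhere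
  · subst g12
    have hA12 : a1 ≠ a2 := fun h => h12 (by rw [h])
    rw [Hcol_within] at E1
    by_cases h13a : a1 = a3
    · subst h13a
      have h23a : a2 ≠ a1 := hA12.symm
      rw [Hcol_crossD g13] at E1 E2
      rw [Hcol_crossPsi g23 h23a] at E2
      by_cases hs : a2.val + a1.val = 2
      · rw [if_pos hs] at E2; exact hD2 _ _ g13 E2
      · rw [if_neg hs] at E2; exact hD1 _ _ g13 E2
    · by_cases h23a : a2 = a3
      · subst h23a
        rw [Hcol_crossPsi g13 h13a] at E1 E2
        rw [Hcol_crossD g23] at E2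
        by_cases hs : a1.val + a2.val = 2
        · rw [if_pos hs] at E2; exact hD2 _ _ g23 E2.symm
        · rw [if_neg hs] at E2; exact hD1 _ _ g23 E2.symm
      · rw [Hcol_crossPsi g13 h13a] at E1 E2
        rw [Hcol_crossPsi g23 h23a] at E2
        rcases fin3_sum_tri hA12 h13a h23a with ⟨u, v, w⟩ | ⟨u, v, w⟩ | ⟨u, v, w⟩
        · rw [if_pos u, if_neg v] at E1; rw [if_neg v, if_neg w] at E2
          exact hyψ _ E1
        · rw [if_neg v, if_pos u] at E1; rw [if_pos u, if_neg w] at E2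
          exact hψ E2.symm
        · rw [if_neg v, if_neg w] at E1; rw [if_neg w, if_pos u] at E2
          exact hψ E2
  -- case FTT : impossible
  · exact absurd (g13.trans g23.symm) g12
  -- case C : p1,p3 in the same group, p2 elsewhere
  · subst g13
    have hA13 : a1 ≠ a3 := fun h => h13 (by rw [h])
    have g21 : i2 ≠ i1 := fun h => g12 h.symm
    by_cases h12a : a1 = a2
    · subst h12a
      rw [Hcol_crossD g12, Hcol_within] at E1
      rw [Hcol_within, Hcol_crossPsi g21 hA13] at E2
      by_cases hs : a1.val + a3.val = 2
      · rw [if_pos hs] at E1 E2; rw [if_pos hs] at E2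
        exact hD2 _ _ g12 (E1.trans E2)
      · rw [if_neg hs] at E1 E2; rw [if_neg hs] at E2
        exact hD1 _ _ g12 (E1.trans E2)
    · by_cases h23a : a2 = a3
      · subst h23a
        rw [Hcol_crossPsi g12 h12a, Hcol_within] at E1
        rw [Hcol_within, Hcol_crossD g21] at E2
        by_cases hs : a1.val + a2.val = 2
        · rw [if_pos hs] at E1 E2; rw [if_pos hs] at E1
          exact hD2 _ _ g21 (E1.trans E2).symm
        · rw [if_neg hs] at E1 E2; rw [if_neg hs] at E1
          exact hD1 _ _ g21 (E1.trans E2).symm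
      · rw [Hcol_crossPsi g12 h12a, Hcol_within] at E1
        rw [Hcol_within, Hcol_crossPsi g21 h23a] at E2
        rcases fin3_sum_tri h12a hA13 h23a with ⟨u, v, w⟩ | ⟨u, v, w⟩ | ⟨u, v, w⟩
        · rw [if_pos u] at E1; rw [if_neg v] at E1 E2; rw [if_neg w] at E2
          exact hψ (E2.symm.trans E1.symm)
        · rw [if_neg v] at E1; rw [if_pos u] at E1 E2; rw [if_neg w] at E2
          exact hyψ _ E1.symm
        · rw [if_neg v] at E1; rw [if_neg w] at E1 E2; rw [if_pos u] at E2
          exact hψ (E1.trans E2)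
  -- case D : p2,p3 in the same group, p1 elsewhere
  · subst g23
    have hA23 : a2 ≠ a3 := fun h => h23 (by rw [h])
    by_cases h12a : a1 = a2
    · subst h12a
      rw [Hcol_crossD g12, Hcol_crossPsi g12 hA23] at E1
      by_cases hs : a1.val + a3.val = 2
      · rw [if_pos hs] at E1; exact hD2 _ _ g12 E1
      · rw [if_neg hs] at E1; exact hD1 _ _ g12 E1
    · by_cases h13a : a1 = a3
      · subst h13a
        rw [Hcol_crossPsi g12 h12a, Hcol_crossD g12] at E1
        by_cases hs : a1.val + a2.val = 2
        · rw [if_pos hs] at E1; exact hD2 _ _ g12 E1.symm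
        · rw [if_neg hs] at E1; exact hD1 _ _ g12 E1.symm
      · rw [Hcol_crossPsi g12 h12a, Hcol_crossPsi g12 h13a] at E1
        rw [Hcol_crossPsi g12 h13a, Hcol_within] at E2
        rcases fin3_sum_tri h12a h13a hA23 with ⟨u, v, w⟩ | ⟨u, v, w⟩ | ⟨u, v, w⟩
        · rw [if_pos u, if_neg v] at E1; exact hψ E1.symm
        · rw [if_neg v, if_pos u] at E1; exact hψ E1
        · rw [if_neg w] at E1 E2; rw [if_neg v] at E1; rw [if_pos u] at E2
          exact hyψ _ E2.symm
  -- case E : three distinct groups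
  · by_cases h12a : a1 = a2
    · by_cases h13a : a1 = a3
      · subst h12a; subst h13a
        rw [Hcol_crossD g12, Hcol_crossD g13] at E1
        rw [Hcol_crossD g13, Hcol_crossD g23] at E2
        exact hDm i1 i2 i3 g12 g13 g23 ⟨E1, E2⟩
      · subst h12a
        rw [Hcol_crossD g12, Hcol_crossPsi g13 h13a] at E1
        by_cases hs : a1.val + a3.val = 2
        · rw [if_pos hs] at E1; exact hD2 _ _ g12 E1
        · rw [if_neg hs] at E1; exact hD1 _ _ g12 E1
    · by_cases h13a : a1 = a3
      · subst h13a
        rw [Hcol_crossPsi g12 h12a, Hcol_crossD g13] at E1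
        by_cases hs : a1.val + a2.val = 2
        · rw [if_pos hs] at E1; exact hD2 _ _ g13 E1.symm
        · rw [if_neg hs] at E1; exact hD1 _ _ g13 E1.symm
      · by_cases h23a : a2 = a3
        · subst h23a
          rw [Hcol_crossPsi g13 h13a] at E2
          rw [Hcol_crossD g23] at E2
          by_cases hs : a1.val + a2.val = 2
          · rw [if_pos hs] at E2; exact hD2 _ _ g23 E2.symm
          · rw [if_neg hs] at E2; exact hD1 _ _ g23 E2.symm
        · rw [Hcol_crossPsi g12 h12a, Hcol_crossPsi g13 h13a] at E1
          rw [Hcol_crossPsi g13 h13a, Hcol_crossPsi g23 h23a] at E2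
          rcases fin3_sum_tri h12a h13a h23a with ⟨u, v, w⟩ | ⟨u, v, w⟩ | ⟨u, v, w⟩
          · rw [if_pos u, if_neg v] at E1; exact hψ E1.symm
          · rw [if_pos u, if_neg w] at E2; exact hψ E2.symm
          · rw [if_neg w, if_pos u] at E2; exact hψ E2

lemma stage [Fintype V] {G : SimpleGraph V} {c : Sym2 V → Fin q} (hq : 3 ≤ q)
    (hG : IsRamsey q G (⊤ : SimpleGraph (Fin 3)))
    (NK : ¬ HasMonoCopy G ((⊤ : SimpleGraph (Fin 3)) ⊕g (⊤ : SimpleGraph (Fin 2))) c)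
    {t : ℕ} (htq : t ≤ q) (hcase : t ≤ q - 1 ∨ 4 ≤ q) (hch : Chain G c t) :
    Chain G c (t+1) := by
  classical
  obtain ⟨w, j, hw, hj, htri⟩ := hch
  have hψ1lt : q - 2 < q := by omega
  have hψ2lt : q - 1 < q := by omega
  set ψ1 : Fin q := ⟨q-2, hψ1lt⟩ with hψ1def
  set ψ2 : Fin q := ⟨q-1, hψ2lt⟩ with hψ2def
  have hv1 : ψ1.val = q - 2 := rfl
  have hv2 : ψ2.val = q - 1 := rfl
  have hψ : ψ1 ≠ ψ2 := by
    intro h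
    rw [Fin.ext_iff, hv1, hv2] at h
    omega
  choose jy hjy1 hjy2 using fun i : Fin t => exists_pick hq (j i) ψ1
  choose jx hjx1 hjx2 using fun i : Fin t => exists_pick hq (j i) (jy i)
  set D : Fin t → Fin t → Fin q :=
    fun i i' => ⟨dval q i.val i'.val, dval_lt hq (i.isLt.trans_le htq) (i'.isLt.trans_le htq)⟩
    with hDdef
  have hDsym : ∀ i i', D i i' = D i' i := fun i i' => Fin.ext (dval_comm q _ _)
  have hDval : ∀ i i' : Fin t, i ≠ i' → (D i i').val + 3 ≤ q := by
    intro i i' h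
    exact dval_le hq hcase htq i.isLt i'.isLt (fun hv => h (Fin.ext hv))
  have hD1 : ∀ i i', i ≠ i' → D i i' ≠ ψ1 := by
    intro i i' h heq
    have h1 := hDval i i' h
    rw [heq] at h1
    rw [hv1] at h1
    omega
  have hD2 : ∀ i i', i ≠ i' → D i i' ≠ ψ2 := by
    intro i i' h heq
    have h1 := hDval i i' h
    rw [heq] at h1
    rw [hv2] at h1
    omega
  have hDm : ∀ i1 i2 i3 : Fin t, i1 ≠ i2 → i1 ≠ i3 → i2 ≠ i3 →
      ¬ (D i1 i2 = D i1 i3 ∧ D i1 i3 = D i2 i3) := by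
    intro i1 i2 i3 n12 n13 n23 ⟨e1, e2⟩
    rw [Fin.ext_iff] at e1 e2
    exact dval_mono (i1.isLt.trans_le htq) (i2.isLt.trans_le htq) (i3.isLt.trans_le htq)
      (fun h => n12 (Fin.ext h)) (fun h => n13 (Fin.ext h)) (fun h => n23 (Fin.ext h)) ⟨e1, e2⟩
  obtain ⟨d, hdXX, hdXo, hdoo⟩ :=
    buildColoring G c w hw (Hcol jx jy ψ1 ψ2 D) (Hcol_symm hDsym) (fun p => j p.1)
  obtain ⟨m, f, hf⟩ := hG d
  obtain ⟨adjAB, colAB⟩ := hf 0 1 (by simp)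
  obtain ⟨adjAC, colAC⟩ := hf 0 2 (by simp)
  obtain ⟨adjBC, colBC⟩ := hf 1 2 (by simp)
  have neAB : f 0 ≠ f 1 := adjAB.ne
  have neAC : f 0 ≠ f 2 := adjAC.ne
  have neBC : f 1 ≠ f 2 := adjBC.ne
  have colBA : d s(f 1, f 0) = m := by rw [Sym2.eq_swap]; exact colAB
  have colCA : d s(f 2, f 0) = m := by rw [Sym2.eq_swap]; exact colAC
  have colCB : d s(f 2, f 1) = m := by rw [Sym2.eq_swap]; exact colBC
  -- helper for the "two inside, one outside" contradiction
  have twoIn : ∀ (p1 p2 : Fin t × Fin 3), p1 ≠ p2 →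
      Hcol jx jy ψ1 ψ2 D p1 p2 = m → j p1.1 = m → j p2.1 = m → False := by
    rintro ⟨i1, a1⟩ ⟨i2, a2⟩ hne hH h1 h2
    have hgr : i1 = i2 := hj (h1.trans h2.symm)
    subst hgr
    rw [Hcol_within] at hH
    by_cases hs : a1.val + a2.val = 2
    · rw [if_pos hs] at hH; exact hjy1 i1 (hH.trans h1.symm)
    · rw [if_neg hs] at hH; exact hjx1 i1 (hH.trans h1.symm)
  -- helper for the "one inside, two outside" contradiction
  have oneIn : ∀ (p : Fin t × Fin 3) (u v : V), G.Adj u v →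
      (∀ a : Fin 3, u ≠ w (p.1, a)) → (∀ a : Fin 3, v ≠ w (p.1, a)) →
      j p.1 = m → c s(u, v) = m → False := by
    intro p u v huv hu hv hjm hc
    exact NK (copy_of_tri_edge (htri p.1) huv (hc.trans hjm.symm)
      (hu 0) (hu 1) (hu 2) (hv 0) (hv 1) (hv 2))
  by_cases mA : ∃ p, w p = f 0 <;> by_cases mB : ∃ p, w p = f 1 <;>
    by_cases mC : ∃ p, w p = f 2
  -- TTT : all three inside
  · obtain ⟨p1, hp1⟩ := mA; obtain ⟨p2, hp2⟩ := mB; obtain ⟨p3, hp3⟩ := mC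
    have n12 : p1 ≠ p2 := fun h => neAB (hp1 ▸ hp2 ▸ congrArg w h)
    have n13 : p1 ≠ p3 := fun h => neAC (hp1 ▸ hp3 ▸ congrArg w h)
    have n23 : p2 ≠ p3 := fun h => neBC (hp2 ▸ hp3 ▸ congrArg w h)
    have e12 : Hcol jx jy ψ1 ψ2 D p1 p2 = m := by
      have h0 := hdXX p1 p2; rw [hp1, hp2] at h0; exact h0.symm.trans colAB
    have e13 : Hcol jx jy ψ1 ψ2 D p1 p3 = m := by
      have h0 := hdXX p1 p3; rw [hp1, hp3] at h0; exact h0.symm.trans colAC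
    have e23 : Hcol jx jy ψ1 ψ2 D p2 p3 = m := by
      have h0 := hdXX p2 p3; rw [hp2, hp3] at h0; exact h0.symm.trans colBC
    exact absurd ⟨e12.trans e13.symm, e13.trans e23.symm⟩
      (gadget_nomono hjx2 hjy2 hψ hD1 hD2 hDm p1 p2 p3 n12 n13 n23)
  -- TTF : f 0, f 1 inside, f 2 outside
  · obtain ⟨p1, hp1⟩ := mA; obtain ⟨p2, hp2⟩ := mB
    have hC' : ∀ p, w p ≠ f 2 := by push_neg at mC; exact mC
    have n12 : p1 ≠ p2 := fun h => neAB (hp1 ▸ hp2 ▸ congrArg w h)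
    have e12 : Hcol jx jy ψ1 ψ2 D p1 p2 = m := by
      have h0 := hdXX p1 p2; rw [hp1, hp2] at h0; exact h0.symm.trans colAB
    have e1 : j p1.1 = m := by
      have h0 := hdXo p1 (f 2) hC'; rw [hp1] at h0; exact h0.symm.trans colAC
    have e2 : j p2.1 = m := by
      have h0 := hdXo p2 (f 2) hC'; rw [hp2] at h0; exact h0.symm.trans colBC
    exact (twoIn p1 p2 n12 e12 e1 e2).elim
  -- TFT : f 0, f 2 inside, f 1 outside
  · obtain ⟨p1, hp1⟩ := mA; obtain ⟨p3, hp3⟩ := mC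
    have hB' : ∀ p, w p ≠ f 1 := by push_neg at mB; exact mB
    have n13 : p1 ≠ p3 := fun h => neAC (hp1 ▸ hp3 ▸ congrArg w h)
    have e13 : Hcol jx jy ψ1 ψ2 D p1 p3 = m := by
      have h0 := hdXX p1 p3; rw [hp1, hp3] at h0; exact h0.symm.trans colAC
    have e1 : j p1.1 = m := by
      have h0 := hdXo p1 (f 1) hB'; rw [hp1] at h0; exact h0.symm.trans colAB
    have e3 : j p3.1 = m := by
      have h0 := hdXo p3 (f 1) hB'; rw [hp3] at h0; exact h0.symm.trans colCB
    exact (twoIn p1 p3 n13 e13 e1 e3).elim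
  -- TFF : f 0 inside, f 1, f 2 outside
  · obtain ⟨p1, hp1⟩ := mA
    have hB' : ∀ p, w p ≠ f 1 := by push_neg at mB; exact mB
    have hC' : ∀ p, w p ≠ f 2 := by push_neg at mC; exact mC
    have e1 : j p1.1 = m := by
      have h0 := hdXo p1 (f 1) hB'; rw [hp1] at h0; exact h0.symm.trans colAB
    have ec : c s(f 1, f 2) = m := (hdoo (f 1) (f 2) hB' hC').symm.trans colBC
    exact (oneIn p1 (f 1) (f 2) adjBC
      (fun a h => hB' (p1.1, a) h.symm) (fun a h => hC' (p1.1, a) h.symm) e1 ec).elim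
  -- FTT : f 1, f 2 inside, f 0 outside
  · obtain ⟨p2, hp2⟩ := mB; obtain ⟨p3, hp3⟩ := mC
    have hA' : ∀ p, w p ≠ f 0 := by push_neg at mA; exact mA
    have n23 : p2 ≠ p3 := fun h => neBC (hp2 ▸ hp3 ▸ congrArg w h)
    have e23 : Hcol jx jy ψ1 ψ2 D p2 p3 = m := by
      have h0 := hdXX p2 p3; rw [hp2, hp3] at h0; exact h0.symm.trans colBC
    have e2 : j p2.1 = m := by
      have h0 := hdXo p2 (f 0) hA'; rw [hp2] at h0; exact h0.symm.trans colBA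
    have e3 : j p3.1 = m := by
      have h0 := hdXo p3 (f 0) hA'; rw [hp3] at h0; exact h0.symm.trans colCA
    exact (twoIn p2 p3 n23 e23 e2 e3).elim
  -- FTF : f 1 inside, f 0, f 2 outside
  · obtain ⟨p2, hp2⟩ := mB
    have hA' : ∀ p, w p ≠ f 0 := by push_neg at mA; exact mA
    have hC' : ∀ p, w p ≠ f 2 := by push_neg at mC; exact mC
    have e2 : j p2.1 = m := by
      have h0 := hdXo p2 (f 0) hA'; rw [hp2] at h0; exact h0.symm.trans colBA
    have ec : c s(f 0, f 2) = m := (hdoo (f 0) (f 2) hA' hC').symm.trans colAC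
    exact (oneIn p2 (f 0) (f 2) adjAC
      (fun a h => hA' (p2.1, a) h.symm) (fun a h => hC' (p2.1, a) h.symm) e2 ec).elim
  -- FFT : f 2 inside, f 0, f 1 outside
  · obtain ⟨p3, hp3⟩ := mC
    have hA' : ∀ p, w p ≠ f 0 := by push_neg at mA; exact mA
    have hB' : ∀ p, w p ≠ f 1 := by push_neg at mB; exact mB
    have e3 : j p3.1 = m := by
      have h0 := hdXo p3 (f 0) hA'; rw [hp3] at h0; exact h0.symm.trans colCA
    have ec : c s(f 0, f 1) = m := (hdoo (f 0) (f 1) hA' hB').symm.trans colAB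
    exact (oneIn p3 (f 0) (f 1) adjAB
      (fun a h => hA' (p3.1, a) h.symm) (fun a h => hB' (p3.1, a) h.symm) e3 ec).elim
  -- FFF : a new triangle outside
  · have hA' : ∀ p, w p ≠ f 0 := by push_neg at mA; exact mA
    have hB' : ∀ p, w p ≠ f 1 := by push_neg at mB; exact mB
    have hC' : ∀ p, w p ≠ f 2 := by push_neg at mC; exact mC
    have cAB : c s(f 0, f 1) = m := (hdoo (f 0) (f 1) hA' hB').symm.trans colAB
    have cAC : c s(f 0, f 2) = m := (hdoo (f 0) (f 2) hA' hC').symm.trans colAC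
    have cBC : c s(f 1, f 2) = m := (hdoo (f 1) (f 2) hB' hC').symm.trans colBC
    by_cases hm : ∃ i, j i = m
    · obtain ⟨i, hi⟩ := hm
      exact absurd (copy_of_tri_edge (htri i) adjAB (cAB.trans hi.symm)
        (fun h => hA' (i, 0) h.symm) (fun h => hA' (i, 1) h.symm) (fun h => hA' (i, 2) h.symm)
        (fun h => hB' (i, 0) h.symm) (fun h => hB' (i, 1) h.symm) (fun h => hB' (i, 2) h.symm)) NK
    · push_neg at hm
      refine ⟨fun pa => if h : pa.1.val < t then w (⟨pa.1.val, h⟩, pa.2) else ![f 0, f 1, f 2] pa.2,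
        fun i => if h : i.val < t then j ⟨i.val, h⟩ else m, ?_, ?_, ?_⟩
      · rintro ⟨i, a⟩ ⟨i', a'⟩ heq
        dsimp only at heq
        by_cases hi : i.val < t <;> by_cases hi' : i'.val < t
        · rw [dif_pos hi, dif_pos hi'] at heq
          have h2 := hw heq
          rw [Prod.mk.injEq, Fin.mk.injEq] at h2
          exact Prod.ext (Fin.ext h2.1) h2.2
        · rw [dif_pos hi, dif_neg hi'] at heq
          exfalso
          fin_cases a'
          · exact hA' _ heq
          · exact hB' _ heq
          · exact hC' _ heq
        · rw [dif_neg hi, dif_pos hi'] at heq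
          exfalso
          fin_cases a
          · exact hA' _ heq.symm
          · exact hB' _ heq.symm
          · exact hC' _ heq.symm
        · rw [dif_neg hi, dif_neg hi'] at heq
          have hii : i = i' := Fin.ext (by have := i.isLt; have := i'.isLt; omega)
          subst hii
          have ha : a = a' := by
            fin_cases a <;> fin_cases a' <;>
              first
                | rfl
                | exact absurd heq neAB
                | exact absurd heq.symm neAB
                | exact absurd heq neAC
                | exact absurd heq.symm neAC
                | exact absurd heq neBC
                | exact absurd heq.symm neBC
          rw [ha]
      · intro i i' heq
        dsimp only at heq
        by_cases hi : i.val < t <;> by_cases hi' : i'.val < t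
        · rw [dif_pos hi, dif_pos hi'] at heq
          have h2 := hj heq
          rw [Fin.mk.injEq] at h2
          exact Fin.ext h2
        · rw [dif_pos hi, dif_neg hi'] at heq
          exact absurd heq (hm _)
        · rw [dif_neg hi, dif_pos hi'] at heq
          exact absurd heq.symm (hm _)
        · exact Fin.ext (by have := i.isLt; have := i'.isLt; omega)
      · intro i
        by_cases hi : i.val < t
        · simp only [dif_pos hi]
          exact htri ⟨i.val, hi⟩
        · simp only [dif_neg hi]
          exact ⟨adjAB, adjAC, adjBC, cAB, cAC, cBC⟩

/-! ### The special gadget for the final stage when `q = 3`. -/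

def M9 : Fin 9 → Fin 9 → Fin 3 :=
  ![![0, 2, 1, 2, 2, 0, 1, 2, 0],
    ![2, 0, 2, 0, 1, 1, 1, 0, 2],
    ![1, 2, 0, 1, 0, 2, 2, 2, 0],
    ![2, 0, 1, 0, 0, 2, 0, 1, 1],
    ![2, 1, 0, 0, 0, 2, 2, 0, 2],
    ![0, 1, 2, 2, 2, 0, 0, 0, 1],
    ![1, 1, 2, 0, 2, 0, 0, 1, 0],
    ![2, 0, 2, 1, 0, 0, 1, 0, 0],
    ![0, 2, 0, 1, 2, 1, 0, 0, 0]]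

def g9 : Fin 9 → Fin 3 := ![0, 0, 0, 1, 1, 1, 2, 2, 2]

lemma M9_symm : ∀ a b, M9 a b = M9 b a := by decide

lemma M9_nomono : ∀ a b c : Fin 9, a ≠ b → a ≠ c → b ≠ c →
    ¬ (M9 a b = M9 a c ∧ M9 a c = M9 b c) := by decide

lemma g9_prop : ∀ a b, a ≠ b → ¬ (g9 a = g9 b ∧ g9 a = M9 a b) := by decide

def enc (p : Fin 3 × Fin 3) : Fin 9 :=
  ⟨p.1.val * 3 + p.2.val, by have := p.1.isLt; have := p.2.isLt; omega⟩

lemma enc_inj : Function.Injective enc := by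
  rintro ⟨i, a⟩ ⟨i', a'⟩ h
  rw [enc, enc, Fin.mk.injEq] at h
  have h1 := i.isLt; have h2 := a.isLt; have h3 := i'.isLt; have h4 := a'.isLt
  exact Prod.ext (Fin.ext (by omega)) (Fin.ext (by omega))

lemma final3 [Fintype V] {G : SimpleGraph V} {c : Sym2 V → Fin 3}
    (hG : IsRamsey 3 G (⊤ : SimpleGraph (Fin 3)))
    (NK : ¬ HasMonoCopy G ((⊤ : SimpleGraph (Fin 3)) ⊕g (⊤ : SimpleGraph (Fin 2))) c)
    (hch : Chain G c 3) : False := by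
  classical
  obtain ⟨w, j, hw, hj, htri⟩ := hch
  have hsurj : Function.Surjective j := Finite.surjective_of_injective hj
  have hedge : ∀ u v : V, G.Adj u v → (∀ p, w p ≠ u) → (∀ p, w p ≠ v) → False := by
    intro u v huv hu hv
    obtain ⟨i, hi⟩ := hsurj (c s(u,v))
    exact NK (copy_of_tri_edge (htri i) huv hi.symm
      (fun h => hu (i, 0) h.symm) (fun h => hu (i, 1) h.symm) (fun h => hu (i, 2) h.symm)
      (fun h => hv (i, 0) h.symm) (fun h => hv (i, 1) h.symm) (fun h => hv (i, 2) h.symm))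
  obtain ⟨d, hdXX, hdXo, hdoo⟩ := buildColoring G c w hw
    (fun p p' => M9 (enc p) (enc p')) (fun p p' => M9_symm _ _) (fun p => g9 (enc p))
  obtain ⟨m, f, hf⟩ := hG d
  obtain ⟨adjAB, colAB⟩ := hf 0 1 (by simp)
  obtain ⟨adjAC, colAC⟩ := hf 0 2 (by simp)
  obtain ⟨adjBC, colBC⟩ := hf 1 2 (by simp)
  have neAB : f 0 ≠ f 1 := adjAB.ne
  have neAC : f 0 ≠ f 2 := adjAC.ne
  have neBC : f 1 ≠ f 2 := adjBC.ne
  have colBA : d s(f 1, f 0) = m := by rw [Sym2.eq_swap]; exact colAB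
  have colCA : d s(f 2, f 0) = m := by rw [Sym2.eq_swap]; exact colAC
  have colCB : d s(f 2, f 1) = m := by rw [Sym2.eq_swap]; exact colBC
  have twoIn : ∀ (p1 p2 : Fin 3 × Fin 3), p1 ≠ p2 →
      M9 (enc p1) (enc p2) = m → g9 (enc p1) = m → g9 (enc p2) = m → False := by
    intro p1 p2 hne hM h1 h2
    exact g9_prop (enc p1) (enc p2) (fun h => hne (enc_inj h))
      ⟨h1.trans h2.symm, h1.trans hM.symm⟩
  by_cases mA : ∃ p, w p = f 0 <;> by_cases mB : ∃ p, w p = f 1 <;>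
    by_cases mC : ∃ p, w p = f 2
  · obtain ⟨p1, hp1⟩ := mA; obtain ⟨p2, hp2⟩ := mB; obtain ⟨p3, hp3⟩ := mC
    have n12 : p1 ≠ p2 := fun h => neAB (hp1 ▸ hp2 ▸ congrArg w h)
    have n13 : p1 ≠ p3 := fun h => neAC (hp1 ▸ hp3 ▸ congrArg w h)
    have n23 : p2 ≠ p3 := fun h => neBC (hp2 ▸ hp3 ▸ congrArg w h)
    have e12 : M9 (enc p1) (enc p2) = m := by
      have h0 := hdXX p1 p2; rw [hp1, hp2] at h0; exact h0.symm.trans colAB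
    have e13 : M9 (enc p1) (enc p3) = m := by
      have h0 := hdXX p1 p3; rw [hp1, hp3] at h0; exact h0.symm.trans colAC
    have e23 : M9 (enc p2) (enc p3) = m := by
      have h0 := hdXX p2 p3; rw [hp2, hp3] at h0; exact h0.symm.trans colBC
    exact M9_nomono (enc p1) (enc p2) (enc p3)
      (fun h => n12 (enc_inj h)) (fun h => n13 (enc_inj h)) (fun h => n23 (enc_inj h))
      ⟨e12.trans e13.symm, e13.trans e23.symm⟩
  · obtain ⟨p1, hp1⟩ := mA; obtain ⟨p2, hp2⟩ := mB
    have hC' : ∀ p, w p ≠ f 2 := by push_neg at mC; exact mC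
    have n12 : p1 ≠ p2 := fun h => neAB (hp1 ▸ hp2 ▸ congrArg w h)
    have e12 : M9 (enc p1) (enc p2) = m := by
      have h0 := hdXX p1 p2; rw [hp1, hp2] at h0; exact h0.symm.trans colAB
    have e1 : g9 (enc p1) = m := by
      have h0 := hdXo p1 (f 2) hC'; rw [hp1] at h0; exact h0.symm.trans colAC
    have e2 : g9 (enc p2) = m := by
      have h0 := hdXo p2 (f 2) hC'; rw [hp2] at h0; exact h0.symm.trans colBC
    exact twoIn p1 p2 n12 e12 e1 e2
  · obtain ⟨p1, hp1⟩ := mA; obtain ⟨p3, hp3⟩ := mC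
    have hB' : ∀ p, w p ≠ f 1 := by push_neg at mB; exact mB
    have n13 : p1 ≠ p3 := fun h => neAC (hp1 ▸ hp3 ▸ congrArg w h)
    have e13 : M9 (enc p1) (enc p3) = m := by
      have h0 := hdXX p1 p3; rw [hp1, hp3] at h0; exact h0.symm.trans colAC
    have e1 : g9 (enc p1) = m := by
      have h0 := hdXo p1 (f 1) hB'; rw [hp1] at h0; exact h0.symm.trans colAB
    have e3 : g9 (enc p3) = m := by
      have h0 := hdXo p3 (f 1) hB'; rw [hp3] at h0; exact h0.symm.trans colCB
    exact twoIn p1 p3 n13 e13 e1 e3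
  · have hB' : ∀ p, w p ≠ f 1 := by push_neg at mB; exact mB
    have hC' : ∀ p, w p ≠ f 2 := by push_neg at mC; exact mC
    exact hedge (f 1) (f 2) adjBC hB' hC'
  · obtain ⟨p2, hp2⟩ := mB; obtain ⟨p3, hp3⟩ := mC
    have hA' : ∀ p, w p ≠ f 0 := by push_neg at mA; exact mA
    have n23 : p2 ≠ p3 := fun h => neBC (hp2 ▸ hp3 ▸ congrArg w h)
    have e23 : M9 (enc p2) (enc p3) = m := by
      have h0 := hdXX p2 p3; rw [hp2, hp3] at h0; exact h0.symm.trans colBC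
    have e2 : g9 (enc p2) = m := by
      have h0 := hdXo p2 (f 0) hA'; rw [hp2] at h0; exact h0.symm.trans colBA
    have e3 : g9 (enc p3) = m := by
      have h0 := hdXo p3 (f 0) hA'; rw [hp3] at h0; exact h0.symm.trans colCA
    exact twoIn p2 p3 n23 e23 e2 e3
  · have hA' : ∀ p, w p ≠ f 0 := by push_neg at mA; exact mA
    have hC' : ∀ p, w p ≠ f 2 := by push_neg at mC; exact mC
    exact hedge (f 0) (f 2) adjAC hA' hC'
  · have hA' : ∀ p, w p ≠ f 0 := by push_neg at mA; exact mA
    have hB' : ∀ p, w p ≠ f 1 := by push_neg at mB; exact mB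
    exact hedge (f 0) (f 1) adjAB hA' hB'
  · have hA' : ∀ p, w p ≠ f 0 := by push_neg at mA; exact mA
    have hB' : ∀ p, w p ≠ f 1 := by push_neg at mB; exact mB
    exact hedge (f 0) (f 1) adjAB hA' hB'

/-- The hard direction. -/
lemma hard [Fintype V] (hq : 3 ≤ q) {G : SimpleGraph V}
    (hG : IsRamsey q G (⊤ : SimpleGraph (Fin 3))) :
    IsRamsey q G ((⊤ : SimpleGraph (Fin 3)) ⊕g (⊤ : SimpleGraph (Fin 2))) := by
  intro c
  by_contra NK
  have ch0 : Chain G c 0 :=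
    ⟨fun p => p.1.elim0, fun i => i.elim0, fun p => p.1.elim0, fun i => i.elim0,
      fun i => i.elim0⟩
  have chain_all : ∀ t, t ≤ q → Chain G c t := by
    intro t
    induction t with
    | zero => exact fun _ => ch0
    | succ n ih =>
      intro h
      exact stage hq hG NK (by omega) (Or.inl (by omega)) (ih (by omega))
  by_cases h4 : 4 ≤ q
  · obtain ⟨w, j, hw, hj, -⟩ := stage hq hG NK le_rfl (Or.inr h4) (chain_all q le_rfl)
    have hcard := Fintype.card_le_of_injective j hj
    simp only [Fintype.card_fin] at hcard
    omega
  · have h3 : q = 3 := by omega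
    subst h3
    exact final3 hG NK (chain_all 3 le_rfl)

end Stmt5Aux

/-- For every `q ≥ 3`, the graphs `K₃ + K₂` (disjoint union of a triangle
and an edge) and `K₃` are `q`-Ramsey-equivalent. -/
theorem stmt5 (q : ℕ) (hq : 3 ≤ q) :
    RamseyEquiv q ((⊤ : SimpleGraph (Fin 3)) ⊕g (⊤ : SimpleGraph (Fin 2)))
      (⊤ : SimpleGraph (Fin 3)) := by
  intro V _ G
  constructor
  · intro hR c
    obtain ⟨i, f, hf⟩ := hR c
    refine ⟨i, (Function.Embedding.inl).trans f, ?_⟩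
    intro a b hab
    exact hf (Sum.inl a) (Sum.inl b) (by simp only [SimpleGraph.sum_adj]; exact hab)
  · intro hR c
    exact Stmt5Aux.hard hq hR c
end

section
/- Let k, t, q, s be integers with q ≥ 2, k > t ≥ 2 and s ≥ 0. If s < (R_q(k−t+1, k, …, k) − q(k−t)) / (qt), then K_k and K_k + sK_t are q-Ramsey-equivalent. -/
open SimpleGraph

/-- `K_k + s·K_t`: the vertex-disjoint union of one copy of `K_k` with `s` copies of `K_t`. -/
def cliquePlusCliques (k s t : ℕ) : SimpleGraph (Fin k ⊕ Fin s × Fin t) :=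
  SimpleGraph.fromRel (fun x y =>
    match x, y with
    | Sum.inl _, Sum.inl _ => True
    | Sum.inr a, Sum.inr b => a.1 = b.1
    | _, _ => False)

/-- `n` has the `q`-colour Ramsey property for the clique sizes `k i`. -/
def RamseyWitness (n q : ℕ) (k : Fin q → ℕ) : Prop :=
  ∀ c : Sym2 (Fin n) → Fin q, ∃ (i : Fin q) (S : Finset (Fin n)),
    S.card = k i ∧ ∀ x ∈ S, ∀ y ∈ S, x ≠ y → c s(x, y) = i

/-- The multicolour Ramsey number `R(k 0, …, k (q-1))`. -/
noncomputable def multiRamsey (q : ℕ) (k : Fin q → ℕ) : ℕ :=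
  sInf { n | RamseyWitness n q k }

/-!
Every `q`-Ramsey graph for `K_k + sK_t` is one for its subgraph `K_k`. Conversely, let
`G → (K_k)_q` and let `c` be a colouring of `G` without monochromatic `K_k + sK_t`. For each
colour `i` with a monochromatic `K_k`, greedily choosing disjoint `K_t`'s shows that some
`k + (s-1)t` vertices meet every `K_t` of colour `i`. The union `W` of these sets has at most
`qts + q(k-t) < R_q(k-t+1, k, …, k)` vertices, so it carries a colouring with no `K_{k-t+1}` in
a colour `j` in which `c` has a `K_k`, and no `K_k` in the other colours. Recolour the edges
inside `W` this way, the edges leaving `W` with `j`, and keep `c` elsewhere. A monochromatic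
`K_k` of the new colouring cannot lie inside `W`, nor avoid `W` (it would contain a `K_t` missed
by `W`); if it crosses `W`, its colour is `j`, so it has at most `k - t` vertices in `W` and
fewer than `t` outside.
-/

open Function

variable {V : Type*} {q : ℕ}

theorem Finset.exists_pairwise_disjoint_or_exists_hitting_set [DecidableEq V] {t : ℕ}
    (P : Finset V → Prop) (hP : ∀ T, P T → T.card ≤ t) (s : ℕ) :
    (∃ T : Fin (s + 1) → Finset V, (∀ j, P (T j)) ∧ Pairwise (Disjoint on T)) ∨
      ∃ U : Finset V, U.card ≤ s * t ∧ ∀ T, P T → ¬Disjoint T U := by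
  by_cases hP₀ : ∃ T, P T
  swap
  · exact .inr ⟨∅, by simp, fun T hT _ => hP₀ ⟨T, hT⟩⟩
  obtain ⟨T₀, hT₀⟩ := hP₀
  induction s generalizing P T₀ with
  | zero =>
    exact .inl ⟨fun _ => T₀, fun _ => hT₀,
      fun j j' hj => (hj (Subsingleton.elim (α := Fin 1) j j')).elim⟩
  | succ s ih =>
    by_cases hP₁ : ∃ T, P T ∧ Disjoint T T₀
    swap
    · exact .inr ⟨T₀, (hP T₀ hT₀).trans (Nat.le_mul_of_pos_left t s.succ_pos),
        fun T hT hTT₀ => hP₁ ⟨T, hT, hTT₀⟩⟩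
    obtain ⟨T₁, hT₁⟩ := hP₁
    rcases ih (fun T => P T ∧ Disjoint T T₀) (fun T hT => hP T hT.1) T₁ hT₁ with
      ⟨T, hTP, hTT⟩ | ⟨U, hU, hUP⟩
    · refine .inl ⟨Fin.cons T₀ T, Fin.cases hT₀ fun j => (hTP j).1, ?_⟩
      intro a b hab
      cases a using Fin.cases <;> cases b using Fin.cases
      · exact absurd rfl hab
      · exact (hTP _).2.symm
      · exact (hTP _).2
      · exact hTT fun h => hab (congrArg Fin.succ h)
    · refine .inr ⟨U ∪ T₀, ?_, fun T hT hTU => ?_⟩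
      · calc (U ∪ T₀).card ≤ U.card + T₀.card := Finset.card_union_le _ _
          _ ≤ s * t + t := add_le_add hU (hP T₀ hT₀)
          _ = (s + 1) * t := by ring
      · rw [Finset.disjoint_union_right] at hTU
        exact hUP T ⟨hT, hTU.2⟩ hTU.1

def IsMonoOn (c : Sym2 V → Fin q) (i : Fin q) (S : Finset V) : Prop :=
  ∀ x ∈ S, ∀ y ∈ S, x ≠ y → c s(x, y) = i

def IsMonoClique (G : SimpleGraph V) (c : Sym2 V → Fin q) (i : Fin q) (S : Finset V) : Prop :=
  ∀ x ∈ S, ∀ y ∈ S, x ≠ y → G.Adj x y ∧ c s(x, y) = i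

section Cliques

variable {G : SimpleGraph V} {c : Sym2 V → Fin q} {i : Fin q}

lemma IsMonoClique.subset {S T : Finset V} (h : IsMonoClique G c i T) (hST : S ⊆ T) :
    IsMonoClique G c i S :=
  fun x hx y hy => h x (hST hx) y (hST hy)

lemma HasMonoCopyColor.of_copy {α β : Type*} {H : SimpleGraph α} {H' : SimpleGraph β}
    (h : HasMonoCopyColor G H' c i) (e : H.Copy H') : HasMonoCopyColor G H c i := by
  obtain ⟨f, hf⟩ := h
  exact ⟨e.toEmbedding.trans f, fun a b hab => hf _ _ (e.toHom.map_adj hab)⟩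

lemma IsRamsey.of_copy {α β : Type*} {H : SimpleGraph α} {H' : SimpleGraph β}
    (h : IsRamsey q G H') (e : H.Copy H') : IsRamsey q G H := fun c =>
  let ⟨i, hi⟩ := h c
  ⟨i, HasMonoCopyColor.of_copy hi e⟩

lemma exists_isMonoClique_of_hasMonoCopyColor {k : ℕ}
    (h : HasMonoCopyColor G (⊤ : SimpleGraph (Fin k)) c i) :
    ∃ K : Finset V, K.card = k ∧ IsMonoClique G c i K := by
  classical
  obtain ⟨f, hf⟩ := h
  refine ⟨Finset.univ.map f, by simp, ?_⟩
  intro x hx y hy hxy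
  simp only [Finset.mem_map, Finset.mem_univ, true_and] at hx hy
  obtain ⟨a, rfl⟩ := hx
  obtain ⟨b, rfl⟩ := hy
  exact hf a b (by simpa using ne_of_apply_ne f hxy)

def topCopyCliquePlusCliques (k s t : ℕ) :
    (⊤ : SimpleGraph (Fin k)).Copy (cliquePlusCliques k s t) :=
  SimpleGraph.Hom.toCopy ⟨Sum.inl, fun hab => by simpa [cliquePlusCliques] using hab⟩
    Sum.inl_injective

lemma hasMonoCopyColor_cliquePlusCliques {k s t : ℕ} {K : Finset V} {T : Fin s → Finset V}
    (hK : K.card = k) (hKc : IsMonoClique G c i K)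
    (hT : ∀ j, (T j).card = t) (hTc : ∀ j, IsMonoClique G c i (T j))
    (hTT : Pairwise (Disjoint on T)) (hKT : ∀ j, Disjoint K (T j)) :
    HasMonoCopyColor G (cliquePlusCliques k s t) c i := by
  let eK : K ≃ Fin k := K.equivFinOfCardEq hK
  let eT (j : Fin s) : T j ≃ Fin t := (T j).equivFinOfCardEq (hT j)
  let fK (a : Fin k) : V := eK.symm a
  let fT (p : Fin s × Fin t) : V := (eT p.1).symm p.2
  have hfK_mem (a : Fin k) : fK a ∈ K := (eK.symm a).2
  have hfT_mem (p : Fin s × Fin t) : fT p ∈ T p.1 := ((eT p.1).symm p.2).2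
  have hfK : Injective fK := Subtype.val_injective.comp eK.symm.injective
  have hfT : Injective fT := by
    rintro ⟨j, x⟩ ⟨j', y⟩ h
    obtain rfl : j = j' := by
      by_contra hjj
      exact Finset.disjoint_left.1 (hTT hjj) (hfT_mem (j, x)) (h ▸ hfT_mem (j', y))
    exact congrArg (Prod.mk j) ((eT j).symm.injective (Subtype.ext h))
  have hKT' (a : Fin k) (p : Fin s × Fin t) : fK a ≠ fT p := fun h =>
    Finset.disjoint_left.1 (hKT p.1) (hfK_mem a) (h ▸ hfT_mem p)
  refine ⟨⟨Sum.elim fK fT, hfK.sumElim hfT hKT'⟩, ?_⟩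
  rintro (a | ⟨j, x⟩) (b | ⟨j', y⟩) hab <;>
    simp only [cliquePlusCliques, fromRel_adj] at hab
  · exact hKc _ (hfK_mem a) _ (hfK_mem b) (hfK.ne fun h => hab.1 (congrArg Sum.inl h))
  · exact (hab.2.elim id id).elim
  · exact (hab.2.elim id id).elim
  · obtain rfl : j = j' := hab.2.elim id Eq.symm
    exact hTc j _ (hfT_mem (j, x)) _ (hfT_mem (j, y))
      (hfT.ne fun h => hab.1 (congrArg Sum.inr h))

end Cliques

def MeetsMonoCliques (G : SimpleGraph V) (c : Sym2 V → Fin q) (i : Fin q) (k t : ℕ)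
    (W : Finset V) : Prop :=
  (∃ K : Finset V, K.card = k ∧ IsMonoClique G c i K) →
    ∀ T : Finset V, T.card = t → IsMonoClique G c i T → ¬Disjoint T W

section Hitting

variable {G : SimpleGraph V} {c : Sym2 V → Fin q} {k s t : ℕ}

lemma MeetsMonoCliques.mono {i : Fin q} {W W' : Finset V} (h : MeetsMonoCliques G c i k t W)
    (hWW' : W ⊆ W') : MeetsMonoCliques G c i k t W' :=
  fun hK T hT hTc hTW' => h hK T hT hTc (hTW'.mono_right hWW')

lemma MeetsMonoCliques.card_lt {i : Fin q} {W B : Finset V} (h : MeetsMonoCliques G c i k t W)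
    (hK : ∃ K : Finset V, K.card = k ∧ IsMonoClique G c i K) (hB : IsMonoClique G c i B)
    (hBW : Disjoint B W) : B.card < t := by
  by_contra! htB
  obtain ⟨T, hTB, hT⟩ := Finset.exists_subset_card_eq htB
  exact h hK T hT (hB.subset hTB) (hBW.mono_left hTB)

lemma exists_meetsMonoCliques_of_not_hasMonoCopyColor {i : Fin q}
    (h : ¬HasMonoCopyColor G (cliquePlusCliques k (s + 1) t) c i) :
    ∃ W : Finset V, W.card ≤ k + s * t ∧ MeetsMonoCliques G c i k t W := by
  classical
  by_cases hK : ∃ K : Finset V, K.card = k ∧ IsMonoClique G c i K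
  swap
  · exact ⟨∅, by simp, fun hK' => absurd hK' hK⟩
  obtain ⟨K, hK, hKc⟩ := hK
  rcases Finset.exists_pairwise_disjoint_or_exists_hitting_set
      (fun T => T.card = t ∧ IsMonoClique G c i T ∧ Disjoint K T) (fun T hT => hT.1.le) s with
    ⟨T, hTP, hTT⟩ | ⟨U, hU, hUP⟩
  · exact absurd (hasMonoCopyColor_cliquePlusCliques hK hKc (fun j => (hTP j).1)
      (fun j => (hTP j).2.1) hTT fun j => (hTP j).2.2) h
  · refine ⟨K ∪ U, ?_, fun _ T hT hTc hTKU => ?_⟩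
    · calc (K ∪ U).card ≤ K.card + U.card := Finset.card_union_le _ _
        _ ≤ k + s * t := by rw [hK]; exact Nat.add_le_add_left hU k
    · rw [Finset.disjoint_union_right] at hTKU
      exact hUP T ⟨hT, hTc, hTKU.1.symm⟩ hTKU.2

lemma exists_meetsMonoCliques_of_not_hasMonoCopy
    (h : ¬HasMonoCopy G (cliquePlusCliques k (s + 1) t) c) :
    ∃ W : Finset V, W.card ≤ q * (k + s * t) ∧ ∀ i, MeetsMonoCliques G c i k t W := by
  classical
  choose Wc hWc hWm using fun i =>
    exists_meetsMonoCliques_of_not_hasMonoCopyColor fun hi => h ⟨i, hi⟩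
  refine ⟨Finset.univ.biUnion Wc, ?_,
    fun i => (hWm i).mono (Finset.subset_biUnion_of_mem Wc (Finset.mem_univ i))⟩
  calc (Finset.univ.biUnion Wc).card ≤ ∑ i, (Wc i).card := Finset.card_biUnion_le
    _ ≤ ∑ _i : Fin q, (k + s * t) := Finset.sum_le_sum fun i _ => hWc i
    _ = q * (k + s * t) := by simp

end Hitting

lemma RamseyWitness.of_comp_perm {n : ℕ} {b : Fin q → ℕ} (σ : Equiv.Perm (Fin q))
    (h : RamseyWitness n q (b ∘ σ)) : RamseyWitness n q b := by
  intro c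
  obtain ⟨i, S, hS, hSc⟩ := h (σ.symm ∘ c)
  exact ⟨σ i, S, hS, fun x hx y hy hxy => σ.symm_apply_eq.1 (hSc x hx y hy hxy)⟩

lemma exists_colouring_of_not_ramseyWitness {α : Type*} [Fintype α] {n : ℕ} {b : Fin q → ℕ}
    (h : ¬RamseyWitness n q b) (hα : Fintype.card α ≤ n) :
    ∃ d : Sym2 α → Fin q, ∀ i (S : Finset α), IsMonoOn d i S → S.card < b i := by
  obtain ⟨ψ, hψ⟩ : ∃ ψ : Sym2 (Fin n) → Fin q, ∀ i S, S.card = b i → ¬IsMonoOn ψ i S := by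
    by_contra! h'
    exact h h'
  obtain ⟨ι⟩ : Nonempty (α ↪ Fin n) := Function.Embedding.nonempty_of_card_le (by simpa using hα)
  refine ⟨ψ ∘ Sym2.map ι, fun i S hS => ?_⟩
  by_contra! hbS
  obtain ⟨S', hS'S, hS'⟩ := Finset.exists_subset_card_eq (hbS.trans (S.card_map ι).ge)
  refine hψ i S' hS' fun x hx y hy hxy => ?_
  obtain ⟨a, ha, rfl⟩ := Finset.mem_map.1 (hS'S hx)
  obtain ⟨b, hb, rfl⟩ := Finset.mem_map.1 (hS'S hy)
  exact hS a ha b hb (ne_of_apply_ne ι hxy)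

open Classical in
noncomputable def recolour (W : Finset V) (d : Sym2 W → Fin q) (j : Fin q) (c : Sym2 V → Fin q) :
    Sym2 V → Fin q := fun e =>
  if h : ∀ x ∈ e, x ∈ W then d (e.pmap (fun x hx => ⟨x, hx⟩) h)
  else if ∃ x ∈ e, x ∈ W then j else c e

section Recolour

variable {W : Finset V} {d : Sym2 W → Fin q} {j : Fin q} {c : Sym2 V → Fin q} {x y : V}

lemma recolour_of_mem_of_mem (hx : x ∈ W) (hy : y ∈ W) :
    recolour W d j c s(x, y) = d s(⟨x, hx⟩, ⟨y, hy⟩) := by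
  rw [recolour, dif_pos (Sym2.forall_mem_pair.2 ⟨hx, hy⟩)]
  rfl

lemma recolour_of_mem_of_notMem (hx : x ∈ W) (hy : y ∉ W) : recolour W d j c s(x, y) = j := by
  simp [recolour, hx, hy]

lemma recolour_of_notMem_of_notMem (hx : x ∉ W) (hy : y ∉ W) :
    recolour W d j c s(x, y) = c s(x, y) := by
  simp [recolour, hx, hy]

lemma not_isMonoClique_recolour {G : SimpleGraph V} {i : Fin q} {b : Fin q → ℕ} {k t : ℕ}
    {K : Finset V} (htk : t ≤ k) (hb : ∀ i, b i ≤ k) (hbj : b j ≤ k - t + 1)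
    (hd : ∀ i (S : Finset W), IsMonoOn d i S → S.card < b i)
    (hW : ∀ i, MeetsMonoCliques G c i k t W)
    (hj : ∃ K : Finset V, K.card = k ∧ IsMonoClique G c j K)
    (hK : K.card = k) : ¬IsMonoClique G (recolour W d j c) i K := by
  classical
  intro hKc
  set A := K.subtype (· ∈ W)
  set B := K.filter (· ∉ W)
  have hAB : A.card + B.card = k := by
    rw [Finset.card_subtype, Finset.card_filter_add_card_filter_not, hK]
  have hA : A.card < b i := hd i A fun x hx y hy hxy => by
    rw [Finset.mem_subtype] at hx hy
    exact (recolour_of_mem_of_mem x.2 y.2).symm.trans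
      (hKc _ hx _ hy (Subtype.coe_ne_coe.2 hxy)).2
  have hBW : Disjoint B W := Finset.disjoint_left.2 fun x hx => (Finset.mem_filter.1 hx).2
  have hBc : IsMonoClique G c i B := fun x hx y hy hxy => by
    obtain ⟨hxK, hxW⟩ := Finset.mem_filter.1 hx
    obtain ⟨hyK, hyW⟩ := Finset.mem_filter.1 hy
    obtain ⟨hxy, hcxy⟩ := hKc x hxK y hyK hxy
    exact ⟨hxy, (recolour_of_notMem_of_notMem hxW hyW).symm.trans hcxy⟩
  rcases A.eq_empty_or_nonempty with hA0 | ⟨⟨a, haW⟩, ha⟩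
  · rw [hA0, Finset.card_empty, zero_add] at hAB
    have := (hW i).card_lt ⟨B, hAB, hBc⟩ hBc hBW
    omega
  rcases B.eq_empty_or_nonempty with hB0 | ⟨x, hx⟩
  · rw [hB0, Finset.card_empty, add_zero] at hAB
    have := hb i
    omega
  obtain rfl : i = j := by
    rw [Finset.mem_subtype] at ha
    obtain ⟨hxK, hxW⟩ := Finset.mem_filter.1 hx
    exact ((recolour_of_mem_of_notMem haW hxW).symm.trans
      (hKc a ha x hxK (ne_of_mem_of_not_mem haW hxW)).2).symm
  have := (hW i).card_lt hj hBc hBW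
  omega

end Recolour

theorem isRamsey_cliquePlusCliques_of_isRamsey_top {G : SimpleGraph V} {k t s : ℕ}
    (hG : IsRamsey q G (⊤ : SimpleGraph (Fin k))) (ht : 0 < t) (htk : t < k)
    (hs : q * t * s + q * (k - t) < multiRamsey q fun i => if (i : ℕ) = 0 then k - t + 1 else k) :
    IsRamsey q G (cliquePlusCliques k s t) := by
  intro c
  by_contra hno
  obtain ⟨j, hj⟩ := hG c
  obtain ⟨Kj, hKj, hKjc⟩ := exists_isMonoClique_of_hasMonoCopyColor hj
  cases s with
  | zero =>
    exact hno ⟨j, hasMonoCopyColor_cliquePlusCliques (T := Fin.elim0) hKj hKjc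
      (fun j => j.elim0) (fun j => j.elim0) (fun j => j.elim0) (fun j => j.elim0)⟩
  | succ s =>
  obtain ⟨W, hWcard, hW⟩ := exists_meetsMonoCliques_of_not_hasMonoCopy hno
  -- colour `0` is the one with the small clique bound `k - t + 1`; `σ` moves it to `j`
  let σ := Equiv.swap ⟨0, j.pos⟩ j
  let b := (fun i : Fin q => if (i : ℕ) = 0 then k - t + 1 else k) ∘ σ
  have hb (i : Fin q) : b i ≤ k := by
    simp only [b, comp_apply]
    split_ifs <;> omega
  have hbj : b j ≤ k - t + 1 := by simp [b, σ]
  have hWm : W.card ≤ q * t * (s + 1) + q * (k - t) := by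
    obtain ⟨r, rfl⟩ := Nat.exists_eq_add_of_le htk.le
    rw [Nat.add_sub_cancel_left]
    exact hWcard.trans_eq (by ring)
  obtain ⟨d, hd⟩ := exists_colouring_of_not_ramseyWitness (α := W) (b := b)
    (fun h => Nat.notMem_of_lt_sInf hs (RamseyWitness.of_comp_perm σ h)) (by simpa using hWm)
  obtain ⟨i, hi⟩ := hG (recolour W d j c)
  obtain ⟨K, hK, hKc⟩ := exists_isMonoClique_of_hasMonoCopyColor hi
  exact not_isMonoClique_recolour htk.le hb hbj hd hW ⟨Kj, hKj, hKjc⟩ hK hKc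

theorem stmt6_general (k t q s : ℕ) (ht : 2 ≤ t) (htk : t < k)
    (hs : q * t * s + q * (k - t) <
      multiRamsey q (fun i => if (i : ℕ) = 0 then k - t + 1 else k)) :
    RamseyEquiv q (⊤ : SimpleGraph (Fin k)) (cliquePlusCliques k s t) := fun _ _ _ =>
  ⟨fun hG => isRamsey_cliquePlusCliques_of_isRamsey_top hG (by omega) htk hs,
    fun hG => IsRamsey.of_copy hG (topCopyCliquePlusCliques k s t)⟩

/-- For `q ≥ 2`, `k > t ≥ 2` and `s < (R_q(k−t+1,k,…,k) − q(k−t))/(qt)`,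
the graphs `K_k` and `K_k + s·K_t` are `q`-Ramsey-equivalent. -/
theorem stmt6 (k t q s : ℕ) (hq : 2 ≤ q) (ht : 2 ≤ t) (htk : t < k)
    (hs : q * t * s + q * (k - t) <
      multiRamsey q (fun i => if (i : ℕ) = 0 then k - t + 1 else k)) :
    RamseyEquiv q (⊤ : SimpleGraph (Fin k)) (cliquePlusCliques k s t) :=
  stmt6_general k t q s ht htk hs
end

section
/- Let q ≥ 2 and s ≥ 2 be integers, let a₁ ≥ a₂ ≥ … ≥ a_s ≥ 1 be integers, and for 1 ≤ i ≤ s define H_i := K_{a₁} + K_{a₂} + ⋯ + K_{a_i} (the vertex-disjoint union). If R_q(a₁ − a_s + 1, a₁, …, a₁) > q(a₁ + a₂ + ⋯ + a_{s−1}), then H_s and H_{s−1} are q-Ramsey-equivalent. -/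
open SimpleGraph

/-- The vertex-disjoint union `K_{a 0} + K_{a 1} + ⋯ + K_{a (m-1)}` of complete graphs. -/
def cliquesUnion (m : ℕ) (a : ℕ → ℕ) : SimpleGraph (Σ j : Fin m, Fin (a j)) :=
  SimpleGraph.fromRel (fun x y => x.1 = y.1)

namespace Stmt13
open Finset

variable {V : Type*} {q : ℕ}

/-- `S` is a clique in `G` all of whose edges have colour `i` under `c`. -/
def MC (G : SimpleGraph V) (c : Sym2 V → Fin q) (i : Fin q) (S : Finset V) : Prop :=
  ∀ x ∈ S, ∀ y ∈ S, x ≠ y → G.Adj x y ∧ c s(x, y) = i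

theorem MC.subset {G : SimpleGraph V} {c : Sym2 V → Fin q} {i : Fin q} {S T : Finset V}
    (h : MC G c i S) (hTS : T ⊆ S) : MC G c i T :=
  fun x hx y hy hxy => h x (hTS hx) y (hTS hy) hxy

/-- A family of `m` pairwise disjoint mono-`i` cliques of sizes `b 0, …, b (m-1)`,
all disjoint from `W`. -/
def Fam (G : SimpleGraph V) (c : Sym2 V → Fin q) (i : Fin q) (m : ℕ) (b : ℕ → ℕ)
    (W : Finset V) : Prop :=
  ∃ S : ℕ → Finset V,
    (∀ j, j < m → (S j).card = b j ∧ Disjoint (S j) W ∧ MC G c i (S j)) ∧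
    (∀ j, j < m → ∀ j', j' < m → j ≠ j' → Disjoint (S j) (S j'))

theorem cu_adj {m : ℕ} {b : ℕ → ℕ} {x y : Σ j : Fin m, Fin (b j)} :
    (cliquesUnion m b).Adj x y ↔ x ≠ y ∧ x.1 = y.1 := by
  rw [cliquesUnion, SimpleGraph.fromRel_adj]
  constructor
  · rintro ⟨h1, h2 | h2⟩
    · exact ⟨h1, h2⟩
    · exact ⟨h1, h2.symm⟩
  · rintro ⟨h1, h2⟩
    exact ⟨h1, Or.inl h2⟩

theorem fam_copy {G : SimpleGraph V} {c : Sym2 V → Fin q} {i : Fin q} {m : ℕ} {b : ℕ → ℕ}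
    {W : Finset V} (h : Fam G c i m b W) : HasMonoCopyColor G (cliquesUnion m b) c i := by
  classical
  obtain ⟨S, h1, h2⟩ := h
  have hg : ∀ j : Fin m, ∃ g : Fin (b (j : ℕ)) → V, Function.Injective g ∧ ∀ x, g x ∈ S j := by
    intro j
    have hcard := (h1 j j.2).1
    have e : Fin (b (j : ℕ)) ≃ {x // x ∈ S (j : ℕ)} :=
      (Fintype.equivFinOfCardEq (by rw [Fintype.card_coe, hcard])).symm
    refine ⟨fun x => (e x : V), ?_, fun x => (e x).2⟩
    intro x y hxy
    exact e.injective (Subtype.ext hxy)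
  choose g hginj hgmem using hg
  have hinj : Function.Injective (fun p : Σ j : Fin m, Fin (b (j : ℕ)) => g p.1 p.2) := by
    rintro ⟨j, x⟩ ⟨j', y⟩ hxy
    simp only at hxy
    by_cases hjj : j = j'
    · subst hjj
      exact congrArg (Sigma.mk j) (hginj j hxy)
    · exfalso
      have hj : (j : ℕ) ≠ (j' : ℕ) := fun hh => hjj (Fin.ext hh)
      have hd := h2 j j.2 j' j'.2 hj
      exact Finset.disjoint_left.mp hd (hgmem j x) (hxy ▸ hgmem j' y)
  refine ⟨⟨_, hinj⟩, ?_⟩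
  intro p p' hadj
  rw [cu_adj] at hadj
  obtain ⟨hne, hfst⟩ := hadj
  obtain ⟨j, x⟩ := p
  obtain ⟨j', y⟩ := p'
  simp only at hfst
  subst hfst
  have hxy : g j x ≠ g j y := by
    intro hh
    exact hne (hinj hh)
  exact (h1 j j.2).2.2 _ (hgmem j x) _ (hgmem j y) hxy

theorem copy_fam {G : SimpleGraph V} {c : Sym2 V → Fin q} {i : Fin q} {m : ℕ} {b : ℕ → ℕ}
    (h : HasMonoCopyColor G (cliquesUnion m b) c i) : Fam G c i m b ∅ := by
  classical
  obtain ⟨f, hf⟩ := h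
  refine ⟨fun j => if hj : j < m then (univ.image fun x : Fin (b j) => f ⟨⟨j, hj⟩, x⟩) else ∅,
    ?_, ?_⟩
  · intro j hj
    dsimp only
    rw [dif_pos hj]
    have hinj : Function.Injective fun x : Fin (b j) => f ⟨⟨j, hj⟩, x⟩ := by
      intro x y hxy
      have h3 := f.injective hxy
      exact eq_of_heq (Sigma.mk.inj_iff.mp h3).2
    refine ⟨?_, disjoint_empty_right _, ?_⟩
    · rw [card_image_of_injective _ hinj, card_univ, Fintype.card_fin]
    · intro x hx y hy hxy
      obtain ⟨x', -, rfl⟩ := mem_image.mp hx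
      obtain ⟨y', -, rfl⟩ := mem_image.mp hy
      exact hf _ _ (cu_adj.mpr ⟨fun hh => hxy (congrArg f hh), rfl⟩)
  · intro j hj j' hj' hjj
    dsimp only
    rw [dif_pos hj, dif_pos hj', Finset.disjoint_left]
    rintro v hv hv'
    obtain ⟨x, -, rfl⟩ := mem_image.mp hv
    obtain ⟨y, -, hy⟩ := mem_image.mp hv'
    have h3 := f.injective hy
    have h4 := congrArg (fun p => ((Sigma.fst p : Fin m) : ℕ)) h3
    simp only at h4
    exact hjj (h4 ▸ rfl)

theorem greedy {G : SimpleGraph V} {c : Sym2 V → Fin q} {s : ℕ} {a : ℕ → ℕ} (hs : 2 ≤ s)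
    (hmono : ∀ i j, i ≤ j → j < s → a j ≤ a i)
    (hc : ¬ HasMonoCopy G (cliquesUnion s a) c) (i : Fin q) (W₀ : Finset V) :
    ∃ W : Finset V, W₀ ⊆ W ∧ W.card ≤ W₀.card + ∑ j ∈ range (s - 1), a (j + 1) ∧
      ∀ S : Finset V, S.card = a 0 → Disjoint S W → ¬ MC G c i S := by
  classical
  have h0F : Fam G c i 0 (fun j => a (j + 1)) W₀ :=
    ⟨fun _ => ∅, fun j hj => absurd hj (by omega), fun j hj => absurd hj (by omega)⟩
  set T : Finset ℕ := (range s).filter (fun t => Fam G c i t (fun j => a (j + 1)) W₀) with hT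
  have h0T : 0 ∈ T := mem_filter.mpr ⟨mem_range.mpr (by omega), h0F⟩
  set t := T.max' ⟨0, h0T⟩ with ht
  have htT : t ∈ T := T.max'_mem _
  have hts : t < s := mem_range.mp (mem_filter.mp htT).1
  obtain ⟨S, hS1, hS2⟩ : Fam G c i t (fun j => a (j + 1)) W₀ := (mem_filter.mp htT).2
  refine ⟨W₀ ∪ (range t).biUnion S, subset_union_left, ?_, ?_⟩
  · refine (card_union_le _ _).trans ?_
    have h1 : ((range t).biUnion S).card ≤ ∑ j ∈ range t, (S j).card := card_biUnion_le
    have h2 : ∑ j ∈ range t, (S j).card = ∑ j ∈ range t, a (j + 1) :=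
      sum_congr rfl fun j hj => (hS1 j (mem_range.mp hj)).1
    have h3 : ∑ j ∈ range t, a (j + 1) ≤ ∑ j ∈ range (s - 1), a (j + 1) :=
      sum_le_sum_of_subset (range_subset_range.mpr (by omega))
    omega
  · intro S' hcard hdisj hMC
    have hdisjW₀ : Disjoint S' W₀ := disjoint_of_subset_right subset_union_left hdisj
    have hdisjB : ∀ j, j < t → Disjoint S' (S j) := by
      intro j hj
      refine disjoint_of_subset_right ?_ hdisj
      exact (subset_biUnion_of_mem S (mem_range.mpr hj)).trans subset_union_right
    by_cases hfull : t = s - 1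
    · apply hc
      refine ⟨i, fam_copy (W := (∅ : Finset V))
        ⟨fun j => if j = 0 then S' else S (j - 1), ?_, ?_⟩⟩
      · intro j hj
        by_cases hj0 : j = 0
        · dsimp only; rw [if_pos hj0, hj0]
          exact ⟨hcard, disjoint_empty_right _, hMC⟩
        · dsimp only; rw [if_neg hj0]
          have hjt : j - 1 < t := by omega
          obtain ⟨hc1, -, hc3⟩ := hS1 (j - 1) hjt
          have he : j - 1 + 1 = j := by omega
          dsimp only at hc1
          rw [he] at hc1
          exact ⟨hc1, disjoint_empty_right _, hc3⟩
      · intro j hj j' hj' hjj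
        by_cases hj0 : j = 0 <;> by_cases hj0' : j' = 0
        · omega
        · dsimp only; rw [if_pos hj0, if_neg hj0']
          exact hdisjB _ (by omega)
        · dsimp only; rw [if_neg hj0, if_pos hj0']
          exact (hdisjB _ (by omega)).symm
        · dsimp only; rw [if_neg hj0, if_neg hj0']
          exact hS2 _ (by omega) _ (by omega) (by omega)
    · obtain ⟨S'', hsub, hcard''⟩ := exists_subset_card_eq (s := S') (n := a (t + 1))
        (by rw [hcard]; exact hmono 0 (t + 1) (by omega) (by omega))
      have hmem : t + 1 ∈ T := by
        refine mem_filter.mpr ⟨mem_range.mpr (by omega), ?_⟩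
        refine ⟨fun j => if j = t then S'' else S j, ?_, ?_⟩
        · intro j hj
          by_cases hjt : j = t
          · dsimp only; rw [if_pos hjt, hjt]
            exact ⟨hcard'', disjoint_of_subset_left hsub hdisjW₀, hMC.subset hsub⟩
          · dsimp only; rw [if_neg hjt]
            exact hS1 j (by omega)
        · intro j hj j' hj' hjj
          by_cases hjt : j = t <;> by_cases hjt' : j' = t
          · omega
          · dsimp only; rw [if_pos hjt, if_neg hjt']
            exact disjoint_of_subset_left hsub (hdisjB j' (by omega))
          · dsimp only; rw [if_neg hjt, if_pos hjt']
            exact (disjoint_of_subset_left hsub (hdisjB j (by omega))).symm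
          · dsimp only; rw [if_neg hjt, if_neg hjt']
            exact hS2 j (by omega) j' (by omega) hjj
      have := T.le_max' _ hmem
      omega

theorem process {G : SimpleGraph V} {c : Sym2 V → Fin q} {s : ℕ} {a : ℕ → ℕ} (hs : 2 ≤ s)
    (hmono : ∀ i j, i ≤ j → j < s → a j ≤ a i)
    (hc : ¬ HasMonoCopy G (cliquesUnion s a) c) (l : List (Fin q)) :
    ∀ W₀ : Finset V,
    ∃ W : Finset V, W₀ ⊆ W ∧
      W.card ≤ W₀.card + l.length * ∑ j ∈ range (s - 1), a (j + 1) ∧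
      ∀ i ∈ l, ∀ S : Finset V, S.card = a 0 → Disjoint S W → ¬ MC G c i S := by
  induction l with
  | nil =>
    intro W₀
    exact ⟨W₀, Finset.Subset.refl _, by simp, by simp⟩
  | cons i l ih =>
    intro W₀
    obtain ⟨W₁, h1, h2, h3⟩ := greedy hs hmono hc i W₀
    obtain ⟨W, g1, g2, g3⟩ := ih W₁
    refine ⟨W, h1.trans g1, ?_, ?_⟩
    · simp only [List.length_cons]
      have he : (l.length + 1) * ∑ j ∈ range (s - 1), a (j + 1)
          = l.length * ∑ j ∈ range (s - 1), a (j + 1) + ∑ j ∈ range (s - 1), a (j + 1) := by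
        ring
      omega
    · intro i' hi' S hScard hSdisj
      rcases List.mem_cons.mp hi' with rfl | hi'
      · exact h3 S hScard (disjoint_of_subset_right g1 hSdisj)
      · exact g3 i' hi' S hScard hSdisj

end Stmt13

/-- For `q ≥ 2`, `s ≥ 2` and `a 0 ≥ a 1 ≥ ⋯ ≥ a (s-1) ≥ 1`, set
`H_i := K_{a 0} + ⋯ + K_{a (i-1)}`. If `R_q(a 0 − a (s-1) + 1, a 0, …, a 0)` exceeds
`q·(a 0 + ⋯ + a (s-2))` then `H_s` and `H_{s-1}` are `q`-Ramsey-equivalent. -/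
theorem stmt13 (q s : ℕ) (hq : 2 ≤ q) (hs : 2 ≤ s) (a : ℕ → ℕ)
    (ha1 : ∀ i < s, 1 ≤ a i)
    (hmono : ∀ i j, i ≤ j → j < s → a j ≤ a i)
    (hR : q * (∑ i ∈ Finset.range (s - 1), a i) <
      multiRamsey q (fun i => if (i : ℕ) = 0 then a 0 - a (s - 1) + 1 else a 0)) :
    RamseyEquiv q (cliquesUnion s a) (cliquesUnion (s - 1) a) := by
  classical
  intro V instV G
  constructor
  · -- easy direction
    intro hRam c
    obtain ⟨i, hcopy⟩ := hRam c
    obtain ⟨S, h1, h2⟩ := Stmt13.copy_fam hcopy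
    exact ⟨i, Stmt13.fam_copy ⟨S, fun j hj => h1 j (by omega),
      fun j hj j' hj' hjj => h2 j (by omega) j' (by omega) hjj⟩⟩
  · -- hard direction
    intro hRam c
    by_contra hc
    obtain ⟨istar, hcopy⟩ := hRam c
    obtain ⟨Sstar, hS1, hS2⟩ := Stmt13.copy_fam hcopy
    obtain ⟨W, hW0W, hWcard, hR3⟩ := Stmt13.process hs hmono hc
      ((Finset.univ.erase istar).toList) ((Finset.range (s - 1)).biUnion Sstar)
    have hSstarW : ∀ j, j < s - 1 → Sstar j ⊆ W := fun j hj =>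
      (Finset.subset_biUnion_of_mem Sstar (Finset.mem_range.mpr hj)).trans hW0W
    have has1 : a (s - 1) ≤ a 0 := hmono 0 (s - 1) (by omega) (by omega)
    have ha1' : 1 ≤ a (s - 1) := ha1 (s - 1) (by omega)
    -- no mono-istar clique of size a (s-1) avoiding W
    have hR2 : ∀ S : Finset V, S.card = a (s - 1) → Disjoint S W → ¬ Stmt13.MC G c istar S := by
      intro S hcard hdisj hMC
      apply hc
      refine ⟨istar, Stmt13.fam_copy (W := (∅ : Finset V))
        ⟨fun j => if j = s - 1 then S else Sstar j, ?_, ?_⟩⟩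
      · intro j hj
        by_cases hjs : j = s - 1
        · dsimp only; rw [if_pos hjs, hjs]
          exact ⟨hcard, Finset.disjoint_empty_right _, hMC⟩
        · dsimp only; rw [if_neg hjs]
          obtain ⟨u1, -, u3⟩ := hS1 j (by omega)
          exact ⟨u1, Finset.disjoint_empty_right _, u3⟩
      · intro j hj j' hj' hjj
        by_cases hjs : j = s - 1 <;> by_cases hjs' : j' = s - 1
        · omega
        · dsimp only; rw [if_pos hjs, if_neg hjs']
          exact Finset.disjoint_of_subset_right (hSstarW j' (by omega)) hdisj
        · dsimp only; rw [if_neg hjs, if_pos hjs']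
          exact (Finset.disjoint_of_subset_right (hSstarW j (by omega)) hdisj).symm
        · dsimp only; rw [if_neg hjs, if_neg hjs']
          exact hS2 j (by omega) j' (by omega) hjj
    -- cardinality bound
    have hWbound : W.card ≤ q * ∑ i ∈ Finset.range (s - 1), a i := by
      have hA0 : ((Finset.range (s - 1)).biUnion Sstar).card ≤ ∑ j ∈ Finset.range (s - 1), a j := by
        refine Finset.card_biUnion_le.trans ?_
        exact le_of_eq (Finset.sum_congr rfl fun j hj => (hS1 j (Finset.mem_range.mp hj)).1)
      have hlen : ((Finset.univ.erase istar).toList).length = q - 1 := by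
        rw [Finset.length_toList, Finset.card_erase_of_mem (Finset.mem_univ _),
          Finset.card_univ, Fintype.card_fin]
      have hsum : ∑ j ∈ Finset.range (s - 1), a (j + 1) ≤ ∑ j ∈ Finset.range (s - 1), a j :=
        Finset.sum_le_sum fun j hj => hmono j (j + 1) (by omega)
          (by have := Finset.mem_range.mp hj; omega)
      rw [hlen] at hWcard
      have hmul : (q - 1) * (∑ j ∈ Finset.range (s - 1), a (j + 1))
          ≤ (q - 1) * ∑ j ∈ Finset.range (s - 1), a j := Nat.mul_le_mul_left _ hsum
      have hqq : (q - 1) * (∑ j ∈ Finset.range (s - 1), a j) + (∑ j ∈ Finset.range (s - 1), a j)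
          = q * ∑ j ∈ Finset.range (s - 1), a j := by
        have hq1 : q - 1 + 1 = q := by omega
        calc (q - 1) * (∑ j ∈ Finset.range (s - 1), a j) + (∑ j ∈ Finset.range (s - 1), a j)
            = ((q - 1) + 1) * (∑ j ∈ Finset.range (s - 1), a j) := by ring
          _ = q * ∑ j ∈ Finset.range (s - 1), a j := by rw [hq1]
      omega
    -- a colouring of the complete graph on W with no large mono cliques
    have hnRW : ¬ RamseyWitness W.card q
        (fun i => if (i : ℕ) = 0 then a 0 - a (s - 1) + 1 else a 0) := by
      intro hrw
      have hle : multiRamsey q (fun i => if (i : ℕ) = 0 then a 0 - a (s - 1) + 1 else a 0)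
          ≤ W.card := Nat.sInf_le hrw
      omega
    obtain ⟨χ₀, hχ₀⟩ : ∃ χ : Sym2 (Fin W.card) → Fin q, ∀ (i : Fin q) (S : Finset (Fin W.card)),
        S.card = (if (i : ℕ) = 0 then a 0 - a (s - 1) + 1 else a 0) →
        ¬ (∀ x ∈ S, ∀ y ∈ S, x ≠ y → χ s(x, y) = i) := by
      by_contra hcon
      push_neg at hcon
      apply hnRW
      intro χ
      obtain ⟨i, S, hcS, hmS⟩ := hcon χ
      exact ⟨i, S, hcS, hmS⟩
    have e : {x // x ∈ W} ≃ Fin W.card := Fintype.equivFinOfCardEq (Fintype.card_coe W)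
    have hq0 : 0 < q := by omega
    set zero : Fin q := ⟨0, hq0⟩ with hzero
    set σ : Equiv.Perm (Fin q) := Equiv.swap zero istar with hσ
    -- the recolouring c'
    obtain ⟨c', hWW, hXo, hoo⟩ : ∃ c' : Sym2 V → Fin q,
        (∀ u v (hu : u ∈ W) (hv : v ∈ W), c' s(u, v) = σ (χ₀ s(e ⟨u, hu⟩, e ⟨v, hv⟩))) ∧
        (∀ u v, u ∈ W → v ∉ W → c' s(u, v) = istar) ∧
        (∀ u v, u ∉ W → v ∉ W → c' s(u, v) = c s(u, v)) := by
      refine ⟨Sym2.lift ⟨fun u v =>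
        if hu : u ∈ W then (if hv : v ∈ W then σ (χ₀ s(e ⟨u, hu⟩, e ⟨v, hv⟩)) else istar)
        else (if v ∈ W then istar else c s(u, v)), fun u v => ?_⟩, ?_, ?_, ?_⟩
      · dsimp only
        by_cases hu : u ∈ W <;> by_cases hv : v ∈ W
        · rw [dif_pos hu, dif_pos hv, dif_pos hv, dif_pos hu]
          exact congrArg σ (congrArg χ₀ Sym2.eq_swap)
        · rw [dif_pos hu, dif_neg hv, dif_neg hv, if_pos hu]
        · rw [dif_neg hu, if_pos hv, dif_pos hv, dif_neg hu]
        · rw [dif_neg hu, dif_neg hv, if_neg hv, if_neg hu]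
          exact congrArg c Sym2.eq_swap
      · intro u v hu hv
        simp only [Sym2.lift_mk]
        rw [dif_pos hu, dif_pos hv]
      · intro u v hu hv
        simp only [Sym2.lift_mk]
        rw [dif_pos hu, dif_neg hv]
      · intro u v hu hv
        simp only [Sym2.lift_mk]
        rw [dif_neg hu, if_neg hv]
    -- apply Ramseyness of H_{s-1} to c'
    obtain ⟨i, hcopy'⟩ := hRam c'
    obtain ⟨P, hP1, hP2⟩ := Stmt13.copy_fam hcopy'
    have h0s : 0 < s - 1 := by omega
    have hP0card : (P 0).card = a 0 := (hP1 0 h0s).1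
    have hP0MC : Stmt13.MC G c' i (P 0) := (hP1 0 h0s).2.2
    by_cases hii : i = istar
    · subst hii
      -- each part has few vertices outside W
      have houtlt : ¬ (a (s - 1) ≤ ((P 0) \ W).card) := by
        intro hge
        obtain ⟨T, hTsub, hTcard⟩ := Finset.exists_subset_card_eq hge
        refine hR2 T hTcard ?_ ?_
        · exact Finset.disjoint_left.mpr fun x hx => (Finset.mem_sdiff.mp (hTsub hx)).2
        · intro x hx y hy hxy
          have hx' := Finset.mem_sdiff.mp (hTsub hx)
          have hy' := Finset.mem_sdiff.mp (hTsub hy)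
          obtain ⟨hadj, hcol⟩ := hP0MC x hx'.1 y hy'.1 hxy
          rw [hoo x y hx'.2 hy'.2] at hcol
          exact ⟨hadj, hcol⟩
      have hinter : a 0 - a (s - 1) + 1 ≤ ((P 0) ∩ W).card := by
        have hpc := Finset.card_sdiff_add_card_inter (P 0) W
        omega
      obtain ⟨T, hTsub, hTcard⟩ := Finset.exists_subset_card_eq hinter
      have hTW : ∀ x ∈ T, x ∈ W := fun x hx => (Finset.mem_inter.mp (hTsub hx)).2
      have hTP : ∀ x ∈ T, x ∈ P 0 := fun x hx => (Finset.mem_inter.mp (hTsub hx)).1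
      have hinj : Function.Injective (fun x : {v // v ∈ T} => e ⟨x.1, hTW x.1 x.2⟩) := by
        intro x y hxy
        have h2 := e.injective hxy
        have h3 := congrArg (fun z : {v // v ∈ W} => z.1) h2
        exact Subtype.ext h3
      refine hχ₀ zero (T.attach.image fun x => e ⟨x.1, hTW x.1 x.2⟩) ?_ ?_
      · rw [Finset.card_image_of_injective _ hinj, Finset.card_attach, hTcard]
        simp [hzero]
      · intro p hp r hr hpr
        obtain ⟨x, hx, rfl⟩ := Finset.mem_image.mp hp
        obtain ⟨y, hy, rfl⟩ := Finset.mem_image.mp hr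
        have hxy : x.1 ≠ y.1 := by
          intro hh
          exact hpr (congrArg e (Subtype.ext hh))
        obtain ⟨-, hcol⟩ := hP0MC x.1 (hTP x.1 x.2) y.1 (hTP y.1 y.2) hxy
        rw [hWW x.1 y.1 (hTW x.1 x.2) (hTW y.1 y.2)] at hcol
        have hss : σ (χ₀ s(e ⟨x.1, hTW x.1 x.2⟩, e ⟨y.1, hTW y.1 y.2⟩)) = σ zero := by
          rw [hcol, hσ, Equiv.swap_apply_left]
        exact σ.injective hss
    · -- i ≠ istar
      have hσi : σ i ≠ zero := by
        intro hh
        apply hii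
        have h2 := congrArg σ hh
        rwa [hσ, Equiv.swap_apply_self, Equiv.swap_apply_left] at h2
      have hσival : ((σ i : Fin q) : ℕ) ≠ 0 := by
        intro h0
        exact hσi (Fin.ext h0)
      by_cases hall : ∀ x ∈ P 0, x ∈ W
      · have hinj : Function.Injective (fun x : {v // v ∈ P 0} => e ⟨x.1, hall x.1 x.2⟩) := by
          intro x y hxy
          have h2 := e.injective hxy
          have h3 := congrArg (fun z : {v // v ∈ W} => z.1) h2
          exact Subtype.ext h3
        refine hχ₀ (σ i) ((P 0).attach.image fun x => e ⟨x.1, hall x.1 x.2⟩) ?_ ?_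
        · rw [Finset.card_image_of_injective _ hinj, Finset.card_attach, hP0card, if_neg hσival]
        · intro p hp r hr hpr
          obtain ⟨x, hx, rfl⟩ := Finset.mem_image.mp hp
          obtain ⟨y, hy, rfl⟩ := Finset.mem_image.mp hr
          have hxy : x.1 ≠ y.1 := by
            intro hh
            exact hpr (congrArg e (Subtype.ext hh))
          obtain ⟨-, hcol⟩ := hP0MC x.1 x.2 y.1 y.2 hxy
          rw [hWW x.1 y.1 (hall x.1 x.2) (hall y.1 y.2)] at hcol
          have hss : σ (χ₀ s(e ⟨x.1, hall x.1 x.2⟩, e ⟨y.1, hall y.1 y.2⟩)) = σ (σ i) := by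
            rw [hcol, hσ, Equiv.swap_apply_self]
          exact σ.injective hss
      · push_neg at hall
        obtain ⟨v, hvP, hvW⟩ := hall
        have hallout : ∀ x ∈ P 0, x ∉ W := by
          intro x hx hxW
          rcases eq_or_ne x v with rfl | hne
          · exact hvW hxW
          · obtain ⟨-, hcol⟩ := hP0MC x hx v hvP hne
            rw [hXo x v hxW hvW] at hcol
            exact hii hcol.symm
        refine hR3 i ?_ (P 0) hP0card ?_ ?_
        · exact Finset.mem_toList.mpr (Finset.mem_erase.mpr ⟨hii, Finset.mem_univ i⟩)
        · exact Finset.disjoint_left.mpr fun x hx => hallout x hx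
        · intro x hx y hy hxy
          obtain ⟨hadj, hcol⟩ := hP0MC x hx y hy hxy
          rw [hoo x y (hallout x hx) (hallout y hy)] at hcol
          exact ⟨hadj, hcol⟩
end

section
/- Let G be a graph with G → (K_3)_3, and let c be a 3-colouring of the edges of G. If for each of the three colours there is a monochromatic copy of K_3 in that colour, then there is a monochromatic copy of K_3 + K_2, i.e. a monochromatic triangle together with a vertex-disjoint edge of the same colour. -/
open SimpleGraph

/-! If there were no monochromatic `K₃ + K₂`, every edge of colour `i` would meet the
triangle of colour `i`, so the at most nine vertices of the three triangles would cover all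
edges of `G`. Collapsing the independent rest to a single vertex maps `G` homomorphically
into `K₁₀`, and the Ramsey property for cliques passes along homomorphisms. But `K₁₀` is not
`3`-Ramsey for `K₃`: colour the edges between two copies of `K₅` with one colour and each
copy of `K₅` with the two triangle-free colourings by a `5`-cycle and its complement. -/

lemma IsRamsey.of_hom {q : ℕ} {V V' W : Type*} {G : SimpleGraph V} {G' : SimpleGraph V'}
    (h : IsRamsey q G (⊤ : SimpleGraph W)) (φ : G →g G') :
    IsRamsey q G' (⊤ : SimpleGraph W) := by
  intro c
  obtain ⟨i, f, hf⟩ := h (c ∘ Sym2.map φ)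
  refine ⟨i, ⟨φ ∘ f, fun a b hab => ?_⟩, fun a b hab => ?_⟩
  · by_contra hne
    exact (φ.map_adj (hf a b hne).1).ne hab
  · exact ⟨φ.map_adj (hf a b hab).1, (hf a b hab).2⟩

noncomputable def SimpleGraph.IsVertexCover.homTopOption {V : Type*} {G : SimpleGraph V}
    {s : Set V} (hs : G.IsVertexCover s) : G →g (⊤ : SimpleGraph (Option s)) where
  toFun v := open Classical in if hv : v ∈ s then some ⟨v, hv⟩ else none
  map_rel' {u v} huv := by
    rcases hs huv with hu | hv
    · by_cases hv : v ∈ s <;> simp [hu, hv, huv.ne]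
    · by_cases hu : u ∈ s <;> simp [hu, hv, huv.ne]

def doubleCycleColouring (x y : ZMod 5 × Bool) : Fin 3 :=
  if x.2 ≠ y.2 then 2 else if x.1 - y.1 = 1 ∨ y.1 - x.1 = 1 then 0 else 1

lemma doubleCycleColouring_comm (x y : ZMod 5 × Bool) :
    doubleCycleColouring x y = doubleCycleColouring y x := by
  unfold doubleCycleColouring
  grind

lemma doubleCycleColouring_no_mono_triangle :
    ∀ x y z : ZMod 5 × Bool, x ≠ y → x ≠ z → y ≠ z →
      ¬(doubleCycleColouring x y = doubleCycleColouring x z ∧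
        doubleCycleColouring x y = doubleCycleColouring y z) := by
  decide

lemma not_isRamsey_top_zmod_five_prod_bool :
    ¬IsRamsey 3 (⊤ : SimpleGraph (ZMod 5 × Bool)) (⊤ : SimpleGraph (Fin 3)) := by
  intro h
  obtain ⟨i, f, hf⟩ := h (Sym2.lift ⟨doubleCycleColouring, doubleCycleColouring_comm⟩)
  have h01 := (hf 0 1 (by decide)).2
  have h02 := (hf 0 2 (by decide)).2
  have h12 := (hf 1 2 (by decide)).2
  simp only [Sym2.lift_mk] at h01 h02 h12
  exact doubleCycleColouring_no_mono_triangle (f 0) (f 1) (f 2)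
    (f.injective.ne (by decide)) (f.injective.ne (by decide)) (f.injective.ne (by decide))
    ⟨h01.trans h02.symm, h01.trans h12.symm⟩

lemma not_isRamsey_top_of_card_le_ten {α : Type*} [Fintype α] (hα : Fintype.card α ≤ 10) :
    ¬IsRamsey 3 (⊤ : SimpleGraph α) (⊤ : SimpleGraph (Fin 3)) := fun h =>
  not_isRamsey_top_zmod_five_prod_bool
    (h.of_hom (Embedding.completeGraph (Function.Embedding.nonempty_of_card_le hα).some).toHom)

lemma hasMonoCopyColor_sum_edge {V W : Type*} {G : SimpleGraph V} {H : SimpleGraph W}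
    {q : ℕ} {c : Sym2 V → Fin q} {i : Fin q} {f : W ↪ V}
    (hf : ∀ a b, H.Adj a b → G.Adj (f a) (f b) ∧ c s(f a, f b) = i)
    {u v : V} (huv : G.Adj u v) (hc : c s(u, v) = i)
    (hu : u ∉ Set.range f) (hv : v ∉ Set.range f) :
    HasMonoCopyColor G (H ⊕g (⊤ : SimpleGraph (Fin 2))) c i := by
  refine ⟨⟨Sum.elim f ![u, v], f.injective.sumElim ?_ ?_⟩, ?_⟩
  · intro a b hab
    fin_cases a <;> fin_cases b <;> simp_all [huv.ne, huv.ne.symm]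
  · intro a b hab
    fin_cases b
    exacts [hu ⟨a, hab⟩, hv ⟨a, hab⟩]
  · rintro (a | a) (b | b) hab
    · exact hf a b hab
    · simp at hab
    · simp at hab
    · fin_cases a <;> fin_cases b <;> simp_all [Sym2.eq_swap, huv.symm]

theorem stmt14_general {V : Type} (G : SimpleGraph V)
    (hG : IsRamsey 3 G (⊤ : SimpleGraph (Fin 3)))
    (c : Sym2 V → Fin 3)
    (htri : ∀ i : Fin 3, HasMonoCopyColor G (⊤ : SimpleGraph (Fin 3)) c i) :
    HasMonoCopy G ((⊤ : SimpleGraph (Fin 3)) ⊕g (⊤ : SimpleGraph (Fin 2))) c := by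
  classical
  by_contra hcon
  choose f hf using htri
  let s : Finset V := Finset.univ.biUnion fun i => Finset.univ.map (f i)
  have hmem : ∀ i a, f i a ∈ s := fun i a =>
    Finset.mem_biUnion.2 ⟨i, Finset.mem_univ _, Finset.mem_map_of_mem _ (Finset.mem_univ a)⟩
  have hcover : G.IsVertexCover s := fun u v huv => by
    by_contra! hout
    exact hcon ⟨_, hasMonoCopyColor_sum_edge (hf (c s(u, v))) huv rfl
      (fun ⟨a, ha⟩ => hout.1 (ha ▸ hmem _ a)) (fun ⟨a, ha⟩ => hout.2 (ha ▸ hmem _ a))⟩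
  have hcard : Fintype.card (Option s) ≤ 10 := by
    have : s.card ≤ 9 := Finset.card_biUnion_le.trans (by simp)
    simp only [Fintype.card_option, Fintype.card_coe]
    omega
  exact not_isRamsey_top_of_card_le_ten hcard (hG.of_hom hcover.homTopOption)

/-- Let `G → (K₃)₃` and let `c` be a 3-colouring of the edges of `G`.
If every colour contains a monochromatic triangle, then there is a monochromatic copy of
`K₃ + K₂` (a monochromatic triangle together with a vertex-disjoint edge of the same
colour). -/
theorem stmt14 {V : Type} [Fintype V] (G : SimpleGraph V)
    (hG : IsRamsey 3 G (⊤ : SimpleGraph (Fin 3)))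
    (c : Sym2 V → Fin 3)
    (htri : ∀ i : Fin 3, HasMonoCopyColor G (⊤ : SimpleGraph (Fin 3)) c i) :
    HasMonoCopy G ((⊤ : SimpleGraph (Fin 3)) ⊕g (⊤ : SimpleGraph (Fin 2))) c :=
  stmt14_general G hG c htri
end
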